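/- arXiv:1507.05518 — 6 statements merged into one kernel-verified Lean document; each statement's English description precedes it below -/
import Mathlib

section
/- Let φ ∈ C¹(ℝ^d) be nonnegative with |∇φ(x)| ≤ C_φ φ(x) for all x, and let 0 < p < ∞. Then for all x, z ∈ ℝ^d: |φ^{1/p}(x+z) − φ^{1/p}(x)| ≤ w_{p,φ}(|z|) φ^{1/p}(x), where w_{p,φ}(r) = (C_φ/p) r (1 + (C_φ/p) r e^{C_φ r/p}). -/
/-!
Along the segment `t ↦ x + t • z` the bound `|∇φ| ≤ C φ` is a linear differential inequality,
so Grönwall gives `φ (x + z) ≤ φ x * exp (C ‖z‖)`, and symmetrically from `x + z` back to `x`.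
Taking `p`-th roots, `B := φ^{1/p} (x + z)` and `A := φ^{1/p} x` satisfy `B ≤ A e^a` and
`A ≤ B e^a` with `a = C ‖z‖ / p`, and the elementary bounds `1 - a ≤ e^{-a}`, `e^a - 1 ≤ a e^a`
turn this into the stated estimate.
-/

open Real

theorem norm_add_le_norm_mul_exp_of_norm_fderiv_le
    {E F : Type*} [NormedAddCommGroup E] [NormedSpace ℝ E]
    [NormedAddCommGroup F] [NormedSpace ℝ F] {f : E → F} (hf : Differentiable ℝ f) {C : ℝ}
    (hbound : ∀ x, ‖fderiv ℝ f x‖ ≤ C * ‖f x‖) (a b : E) :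
    ‖f (a + b)‖ ≤ ‖f a‖ * exp (C * ‖b‖) := by
  have hline : ∀ t : ℝ, HasDerivAt (fun t : ℝ => f (a + t • b)) (fderiv ℝ f (a + t • b) b) t :=
    fun t => (hf _).hasFDerivAt.comp_hasDerivAt t (((hasDerivAt_id t).smul_const b).const_add a
      |>.congr_deriv (one_smul ℝ b))
  have := norm_le_gronwallBound_of_norm_deriv_right_le (a := 0) (b := 1) (ε := 0)
    (δ := ‖f a‖) (K := C * ‖b‖) (fun t _ => (hline t).continuousAt.continuousWithinAt)
    (fun t _ => (hline t).hasDerivWithinAt) (by simp) (fun t _ => ?_) 1 (by simp)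
  · simpa [gronwallBound_ε0] using this
  · calc ‖fderiv ℝ f (a + t • b) b‖ ≤ ‖fderiv ℝ f (a + t • b)‖ * ‖b‖ :=
          (fderiv ℝ f _).le_opNorm b
      _ ≤ C * ‖f (a + t • b)‖ * ‖b‖ := by gcongr; exact hbound _
      _ = C * ‖b‖ * ‖f (a + t • b)‖ + 0 := by ring

theorem abs_sub_le_of_le_mul_exp {A B a : ℝ} (ha : 0 ≤ a) (hA : 0 ≤ A)
    (hBA : B ≤ A * exp a) (hAB : A ≤ B * exp a) :
    |B - A| ≤ a * (1 + a * exp a) * A := by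
  have hexp_sub_one : exp a - 1 ≤ a * exp a := by
    have := mul_le_mul_of_nonneg_right (one_sub_le_exp_neg a) (exp_pos a).le
    rw [← exp_add, neg_add_cancel, exp_zero, sub_mul, one_mul] at this
    linarith
  have hB_lower : A * exp (-a) ≤ B := by
    calc A * exp (-a) ≤ B * exp a * exp (-a) := by gcongr
      _ = B := by rw [mul_assoc, ← exp_add, add_neg_cancel, exp_zero, mul_one]
  rw [abs_le]
  constructor
  · have : 0 ≤ a * a * exp a * A := by positivity
    nlinarith [mul_le_mul_of_nonneg_left (one_sub_le_exp_neg a) hA]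
  · calc B - A ≤ A * (exp a - 1) := by linarith
      _ ≤ A * (a * exp a) := by gcongr
      _ ≤ a * (1 + a * exp a) * A := by
        nlinarith [mul_le_mul_of_nonneg_left hexp_sub_one (mul_nonneg ha hA)]

theorem stmt2 (d : ℕ) (Cφ p : ℝ) (hC : 0 ≤ Cφ) (hp : 0 < p)
    (φ : EuclideanSpace ℝ (Fin d) → ℝ) (hφ1 : ContDiff ℝ 1 φ)
    (hφ0 : ∀ x, 0 ≤ φ x) (hgrad : ∀ x, ‖gradient φ x‖ ≤ Cφ * φ x)
    (x z : EuclideanSpace ℝ (Fin d)) :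
    |φ (x + z) ^ (1 / p) - φ x ^ (1 / p)| ≤
      (Cφ / p * ‖z‖ * (1 + Cφ / p * ‖z‖ * Real.exp (Cφ * ‖z‖ / p))) * φ x ^ (1 / p) := by
  have hbound : ∀ x, ‖fderiv ℝ φ x‖ ≤ Cφ * ‖φ x‖ := fun x => by
    simpa [gradient, norm_of_nonneg (hφ0 x)] using hgrad x
  have hroot_growth : ∀ u v, φ (u + v) ^ (1 / p) ≤ φ u ^ (1 / p) * exp (Cφ / p * ‖v‖) := by
    intro u v
    have h := norm_add_le_norm_mul_exp_of_norm_fderiv_le (hφ1.differentiable one_ne_zero)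
      hbound u v
    rw [norm_of_nonneg (hφ0 _), norm_of_nonneg (hφ0 _)] at h
    calc φ (u + v) ^ (1 / p) ≤ (φ u * exp (Cφ * ‖v‖)) ^ (1 / p) := by gcongr; exact hφ0 _
      _ = φ u ^ (1 / p) * exp (Cφ / p * ‖v‖) := by
        rw [mul_rpow (hφ0 u) (exp_pos _).le, ← exp_mul]; ring_nf
  rw [mul_div_right_comm]
  exact abs_sub_le_of_le_mul_exp (by positivity) (rpow_nonneg (hφ0 x) _) (hroot_growth x z)
    (by simpa using hroot_growth (x + z) (-z))
end

section
/- Let φ ∈ 𝔑 with constant C_φ, let 1 ≤ p < ∞, f ∈ C_c(ℝ^d), and g ∈ L^p(ℝ^d, φ dx). Then the convolution f⋆g satisfies ‖f⋆g‖_{L^p(φ)} ≤ (∫_{ℝ^d} |f(x)| (1 + w_{p,φ}(|x|)) dx) ‖g‖_{L^p(φ)}, where w_{p,φ}(r) = (C_φ/p) r (1 + (C_φ/p) r e^{C_φ r/p}). -/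
/-!
Gronwall's inequality along segments turns `‖∇φ‖ ≤ C φ` into the moderateness estimate
`φ x ≤ φ (x - t) e^(C‖t‖)`. Hence `|f ⋆ g| φ^(1/p) ≤ (|f| e^(C‖·‖/p)) ⋆ (|g| φ^(1/p))` pointwise,
and Young's inequality `‖F ⋆ K‖_p ≤ ‖F‖_1 ‖K‖_p` (Hölder for the measure `F t dt`, then Tonelli
and translation invariance) bounds the weighted norm of `f ⋆ g` by
`(∫ |f| e^(C‖·‖/p)) ‖g‖_(p,φ)`. It remains to note that `e^s ≤ 1 + s (1 + s e^s)` for `s ≥ 0`.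
-/

open MeasureTheory
open scoped ENNReal

theorem Real.exp_le_one_add_mul_one_add_mul_exp {s : ℝ} (hs : 0 ≤ s) :
    Real.exp s ≤ 1 + s * (1 + s * Real.exp s) := by
  have h : Real.exp s ≤ 1 + s * Real.exp s := by
    have hneg := Real.one_sub_le_exp_neg s
    have hprod : Real.exp (-s) * Real.exp s = 1 := by
      rw [← Real.exp_add, neg_add_cancel, Real.exp_zero]
    nlinarith [Real.exp_pos s]
  nlinarith

theorem norm_gradient_eq_norm_fderiv {𝕜 F : Type*} [RCLike 𝕜] [NormedAddCommGroup F]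
    [InnerProductSpace 𝕜 F] [CompleteSpace F] (f : F → 𝕜) (x : F) :
    ‖gradient f x‖ = ‖fderiv 𝕜 f x‖ :=
  (InnerProductSpace.toDual 𝕜 F).symm.norm_map _

theorem le_mul_exp_norm_sub_of_norm_fderiv_le {E : Type*} [NormedAddCommGroup E]
    [NormedSpace ℝ E] {φ : E → ℝ} {C : ℝ} (hφ : Differentiable ℝ φ) (hφ0 : ∀ x, 0 ≤ φ x)
    (hbound : ∀ x, ‖fderiv ℝ φ x‖ ≤ C * φ x) (x y : E) :
    φ x ≤ φ y * Real.exp (C * ‖x - y‖) := by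
  set γ : ℝ → E := fun s => y + s • (x - y)
  have hγ : ∀ s, HasDerivAt γ (x - y) s := fun s => by
    simpa only [one_smul] using ((hasDerivAt_id' s).smul_const (x - y)).const_add y
  have hder : ∀ s, HasDerivAt (φ ∘ γ) (fderiv ℝ φ (γ s) (x - y)) s := fun s =>
    (hφ (γ s)).hasFDerivAt.comp_hasDerivAt s (hγ s)
  -- Gronwall along the segment from `y` to `x`, where `|(φ ∘ γ)'| ≤ C ‖x - y‖ (φ ∘ γ)`
  have := norm_le_gronwallBound_of_norm_deriv_right_le (a := 0) (b := 1) (ε := 0)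
    (δ := φ y) (K := C * ‖x - y‖)
    (fun s _ => (hder s).continuousAt.continuousWithinAt) (fun s _ => (hder s).hasDerivWithinAt)
    (by simp [γ, abs_of_nonneg (hφ0 y)])
    (fun s _ => by
      rw [Function.comp_apply, Real.norm_of_nonneg (hφ0 _), add_zero, mul_right_comm]
      exact ((fderiv ℝ φ (γ s)).le_opNorm _).trans
        (mul_le_mul_of_nonneg_right (hbound _) (norm_nonneg _)))
    1 (by simp)
  simpa [gronwallBound_ε0, γ, Real.norm_of_nonneg (hφ0 x)] using this

namespace ENNReal

theorem ofReal_abs_mul_rpow_one_div_rpow {a b p : ℝ} (hb : 0 ≤ b) (hp : 0 < p) :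
    ENNReal.ofReal (|a| * b ^ (1 / p)) ^ p = ENNReal.ofReal (|a| ^ p * b) := by
  rw [ofReal_rpow_of_nonneg (by positivity) hp.le,
    Real.mul_rpow (abs_nonneg a) (by positivity), one_div, Real.rpow_inv_rpow hb hp.ne']

theorem lintegral_mul_rpow_le {α : Type*} [MeasurableSpace α] {μ : Measure α} {p : ℝ}
    (hp : 1 ≤ p) {f g : α → ℝ≥0∞} (hf : AEMeasurable f μ) (hg : AEMeasurable g μ) :
    (∫⁻ a, f a * g a ∂μ) ^ p ≤ (∫⁻ a, f a ∂μ) ^ (p - 1) * ∫⁻ a, f a * g a ^ p ∂μ := by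
  rcases hp.eq_or_lt with rfl | hp1
  · simp
  have hpq := Real.HolderConjugate.conjExponent hp1
  set q := p.conjExponent
  -- Hölder applied to the factorisation `f * g = (f ^ (1/p) * g) * f ^ (1/q)`
  have holder := lintegral_mul_le_Lp_mul_Lq μ hpq
    ((hf.pow_const (1 / p)).mul hg) (hf.pow_const (1 / q))
  have hsplit : ∀ a, f a ^ (1 / p) * g a * f a ^ (1 / q) = f a * g a := fun a => by
    rw [mul_right_comm, ← rpow_add_of_nonneg _ _ hpq.one_div_nonneg
      hpq.symm.one_div_nonneg, one_div, one_div, hpq.inv_add_inv_eq_one, rpow_one]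
  have hpow_p : ∀ a, (f a ^ (1 / p) * g a) ^ p = f a * g a ^ p := fun a => by
    rw [mul_rpow_of_nonneg _ _ hpq.nonneg, ← rpow_mul,
      one_div_mul_cancel hpq.ne_zero, rpow_one]
  have hpow_q : ∀ a, (f a ^ (1 / q)) ^ q = f a := fun a => by
    rw [← rpow_mul, one_div_mul_cancel hpq.symm.ne_zero, rpow_one]
  simp only [Pi.mul_apply, hsplit, hpow_p, hpow_q] at holder
  calc (∫⁻ a, f a * g a ∂μ) ^ p
      ≤ ((∫⁻ a, f a * g a ^ p ∂μ) ^ (1 / p) * (∫⁻ a, f a ∂μ) ^ (1 / q)) ^ p := by gcongr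
    _ = (∫⁻ a, f a ∂μ) ^ (p - 1) * ∫⁻ a, f a * g a ^ p ∂μ := by
      rw [mul_rpow_of_nonneg _ _ hpq.nonneg, ← rpow_mul, ← rpow_mul,
        one_div_mul_cancel hpq.ne_zero, rpow_one, mul_comm, one_div_mul_eq_div,
        hpq.div_conj_eq_sub_one]

end ENNReal

namespace MeasureTheory

section AddGroup

variable {G : Type*} [MeasurableSpace G] [AddGroup G] [MeasurableAdd₂ G] [MeasurableNeg G]
  {μ : Measure G} [μ.IsAddLeftInvariant] [SFinite μ] {f g : G → ℝ≥0∞}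

theorem lintegral_lconvolution (hf : AEMeasurable f μ) (hg : AEMeasurable g μ) :
    ∫⁻ x, (f ⋆ₗ[μ] g) x ∂μ = (∫⁻ x, f x ∂μ) * ∫⁻ x, g x ∂μ := by
  simp only [lconvolution_def]
  rw [lintegral_lintegral_swap (by fun_prop), ← lintegral_mul_const'' _ hf]
  refine lintegral_congr fun y => ?_
  have hgy : AEMeasurable (fun x => g (-y + x)) μ :=
    hg.comp_quasiMeasurePreserving (measurePreserving_add_left μ (-y)).quasiMeasurePreserving
  rw [lintegral_const_mul'' _ hgy, lintegral_add_left_eq_self g (-y)]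

theorem lintegral_lconvolution_rpow_le {p : ℝ} (hp : 1 ≤ p)
    (hf : AEMeasurable f μ) (hg : AEMeasurable g μ) :
    ∫⁻ x, (f ⋆ₗ[μ] g) x ^ p ∂μ ≤ (∫⁻ x, f x ∂μ) ^ p * ∫⁻ x, g x ^ p ∂μ := by
  have hgp : AEMeasurable (fun x => g x ^ p) μ := hg.pow_const p
  calc ∫⁻ x, (f ⋆ₗ[μ] g) x ^ p ∂μ
      ≤ ∫⁻ x, (∫⁻ y, f y ∂μ) ^ (p - 1) * (f ⋆ₗ[μ] fun y => g y ^ p) x ∂μ :=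
        lintegral_mono fun x => ENNReal.lintegral_mul_rpow_le hp hf (by fun_prop)
    _ = (∫⁻ x, f x ∂μ) ^ (p - 1) * ((∫⁻ x, f x ∂μ) * ∫⁻ x, g x ^ p ∂μ) := by
      rw [lintegral_const_mul'' _ (by fun_prop), lintegral_lconvolution hf hgp]
    _ = (∫⁻ x, f x ∂μ) ^ p * ∫⁻ x, g x ^ p ∂μ := by
      rw [← mul_assoc]
      congr 1
      conv_rhs => rw [← sub_add_cancel p 1,
        ENNReal.rpow_add_of_nonneg _ _ (sub_nonneg.2 hp) zero_le_one, ENNReal.rpow_one]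

end AddGroup

theorem integral_le_of_lintegral_ofReal_le {α : Type*} [MeasurableSpace α] {ν : Measure α}
    {u : α → ℝ} (hu : ∀ x, 0 ≤ u x) {c : ℝ} (hc : 0 ≤ c)
    (h : ∫⁻ x, ENNReal.ofReal (u x) ∂ν ≤ ENNReal.ofReal c) : ∫ x, u x ∂ν ≤ c := by
  refine (ENNReal.ofReal_le_ofReal_iff hc).1 (le_trans ?_ h)
  calc ENNReal.ofReal (∫ x, u x ∂ν) ≤ ‖∫ x, u x ∂ν‖ₑ := Real.ofReal_le_enorm _
    _ ≤ ∫⁻ x, ‖u x‖ₑ ∂ν := enorm_integral_le_lintegral_enorm _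
    _ = ∫⁻ x, ENNReal.ofReal (u x) ∂ν := by simp_rw [Real.enorm_of_nonneg (hu _)]

section AddCommGroup

variable {G : Type*} [MeasurableSpace G] [AddCommGroup G] {μ : Measure G} {p : ℝ}
  {φ ψ f g : G → ℝ}

theorem ofReal_abs_integral_mul_rpow_le_lconvolution (hp : 0 < p) (hφ0 : ∀ x, 0 ≤ φ x)
    (hψ0 : ∀ t, 0 ≤ ψ t) (hmod : ∀ x t, φ x ≤ φ (x - t) * ψ t ^ p) (x : G) :
    ENNReal.ofReal (|∫ t, f t * g (x - t) ∂μ| * φ x ^ (1 / p)) ≤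
      ((fun t => ENNReal.ofReal (|f t| * ψ t)) ⋆ₗ[μ]
        fun y => ENNReal.ofReal (|g y| * φ y ^ (1 / p))) x := by
  have hroot : ∀ t, φ x ^ (1 / p) ≤ φ (x - t) ^ (1 / p) * ψ t := fun t => by
    calc φ x ^ (1 / p) ≤ (φ (x - t) * ψ t ^ p) ^ (1 / p) := by gcongr; exacts [hφ0 x, hmod x t]
      _ = φ (x - t) ^ (1 / p) * ψ t := by
        rw [Real.mul_rpow (hφ0 _) (by positivity [hψ0 t]), ← Real.rpow_mul (hψ0 t),
          mul_one_div_cancel hp.ne', Real.rpow_one]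
  have hpoint : ∀ t, ‖f t * g (x - t)‖ₑ * ENNReal.ofReal (φ x ^ (1 / p)) ≤
      ENNReal.ofReal (|f t| * ψ t) * ENNReal.ofReal (|g (-t + x)| * φ (-t + x) ^ (1 / p)) := by
    intro t
    rw [Real.enorm_eq_ofReal_abs, ← ENNReal.ofReal_mul (abs_nonneg _),
      ← ENNReal.ofReal_mul (by positivity [hψ0 t]), neg_add_eq_sub, abs_mul]
    refine ENNReal.ofReal_le_ofReal ?_
    calc |f t| * |g (x - t)| * φ x ^ (1 / p)
        ≤ |f t| * |g (x - t)| * (φ (x - t) ^ (1 / p) * ψ t) := by gcongr; exact hroot t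
      _ = |f t| * ψ t * (|g (x - t)| * φ (x - t) ^ (1 / p)) := by ring
  calc ENNReal.ofReal (|∫ t, f t * g (x - t) ∂μ| * φ x ^ (1 / p))
      = ‖∫ t, f t * g (x - t) ∂μ‖ₑ * ENNReal.ofReal (φ x ^ (1 / p)) := by
        rw [ENNReal.ofReal_mul (abs_nonneg _), Real.enorm_eq_ofReal_abs]
    _ ≤ (∫⁻ t, ‖f t * g (x - t)‖ₑ ∂μ) * ENNReal.ofReal (φ x ^ (1 / p)) := by
        gcongr; exact enorm_integral_le_lintegral_enorm _
    _ = ∫⁻ t, ‖f t * g (x - t)‖ₑ * ENNReal.ofReal (φ x ^ (1 / p)) ∂μ :=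
        (lintegral_mul_const' _ _ ENNReal.ofReal_ne_top).symm
    _ ≤ _ := lintegral_mono hpoint

theorem integral_abs_convolution_rpow_mul_le [MeasurableAdd₂ G] [MeasurableNeg G]
    [μ.IsAddLeftInvariant] [SFinite μ] (hp : 1 ≤ p) (hφ0 : ∀ x, 0 ≤ φ x)
    (hψ0 : ∀ t, 0 ≤ ψ t) (hmod : ∀ x t, φ x ≤ φ (x - t) * ψ t ^ p)
    (hφm : AEMeasurable φ μ) (hgm : AEStronglyMeasurable g μ)
    (hf : Integrable (fun t => |f t| * ψ t) μ) (hg : Integrable (fun x => |g x| ^ p * φ x) μ) :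
    (∫ x, |∫ t, f t * g (x - t) ∂μ| ^ p * φ x ∂μ) ^ (1 / p) ≤
      (∫ t, |f t| * ψ t ∂μ) * (∫ x, |g x| ^ p * φ x ∂μ) ^ (1 / p) := by
  have hp0 : 0 < p := by linarith
  set A := ∫ t, |f t| * ψ t ∂μ
  set B := ∫ x, |g x| ^ p * φ x ∂μ
  have hA : 0 ≤ A := integral_nonneg fun t => by positivity [hψ0 t]
  have hB : 0 ≤ B := integral_nonneg fun x => by positivity [hφ0 x]
  set H : G → ℝ≥0∞ := fun t => ENNReal.ofReal (|f t| * ψ t)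
  set K : G → ℝ≥0∞ := fun y => ENNReal.ofReal (|g y| * φ y ^ (1 / p))
  have hH : AEMeasurable H μ := hf.aemeasurable.ennreal_ofReal
  have hK : AEMeasurable K μ :=
    (hgm.aemeasurable.abs.mul (hφm.pow_const _)).ennreal_ofReal
  have hlint : ∫⁻ x, ENNReal.ofReal (|∫ t, f t * g (x - t) ∂μ| ^ p * φ x) ∂μ ≤
      ENNReal.ofReal (A ^ p * B) :=
    calc ∫⁻ x, ENNReal.ofReal (|∫ t, f t * g (x - t) ∂μ| ^ p * φ x) ∂μ
        = ∫⁻ x, ENNReal.ofReal (|∫ t, f t * g (x - t) ∂μ| * φ x ^ (1 / p)) ^ p ∂μ := by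
          simp_rw [ENNReal.ofReal_abs_mul_rpow_one_div_rpow (hφ0 _) hp0]
      _ ≤ ∫⁻ x, (H ⋆ₗ[μ] K) x ^ p ∂μ := lintegral_mono fun x => by
          gcongr; exact ofReal_abs_integral_mul_rpow_le_lconvolution hp0 hφ0 hψ0 hmod x
      _ ≤ (∫⁻ t, H t ∂μ) ^ p * ∫⁻ y, K y ^ p ∂μ := lintegral_lconvolution_rpow_le hp hH hK
      _ = ENNReal.ofReal (A ^ p * B) := by
          simp_rw [K, ENNReal.ofReal_abs_mul_rpow_one_div_rpow (hφ0 _) hp0, H,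
            ← ofReal_integral_eq_lintegral_ofReal hf (.of_forall fun t => by positivity [hψ0 t]),
            ← ofReal_integral_eq_lintegral_ofReal hg (.of_forall fun x => by positivity [hφ0 x])]
          rw [ENNReal.ofReal_rpow_of_nonneg hA hp0.le, ENNReal.ofReal_mul (by positivity)]
  calc (∫ x, |∫ t, f t * g (x - t) ∂μ| ^ p * φ x ∂μ) ^ (1 / p)
      ≤ (A ^ p * B) ^ (1 / p) := by
        gcongr
        · exact integral_nonneg fun x => by positivity [hφ0 x]
        · exact integral_le_of_lintegral_ofReal_le (fun x => by positivity [hφ0 x])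
            (by positivity) hlint
    _ = A * B ^ (1 / p) := by
        rw [Real.mul_rpow (by positivity) hB, one_div, Real.rpow_rpow_inv hA hp0.ne']

end AddCommGroup

end MeasureTheory

theorem stmt4_general (d : ℕ) (Cφ p : ℝ) (hC : 0 ≤ Cφ) (hp : 1 ≤ p)
    (φ : EuclideanSpace ℝ (Fin d) → ℝ) (hφ1 : ContDiff ℝ 1 φ)
    (hφ0 : ∀ x, 0 ≤ φ x)
    (hgrad : ∀ x, ‖gradient φ x‖ ≤ Cφ * φ x)
    (f g : EuclideanSpace ℝ (Fin d) → ℝ)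
    (hfc : Continuous f) (hfs : HasCompactSupport f)
    (hgm : AEStronglyMeasurable g volume)
    (hg : Integrable (fun x => |g x| ^ p * φ x)) :
    (∫ x, |∫ t, f t * g (x - t)| ^ p * φ x) ^ (1 / p) ≤
      (∫ x, |f x| * (1 + Cφ / p * ‖x‖ *
          (1 + Cφ / p * ‖x‖ * Real.exp (Cφ * ‖x‖ / p)))) *
        (∫ x, |g x| ^ p * φ x) ^ (1 / p) := by
  have hp0 : 0 < p := by linarith
  set ψ : EuclideanSpace ℝ (Fin d) → ℝ := fun t => Real.exp (Cφ * ‖t‖ / p)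
  have hψ : Continuous ψ := by fun_prop
  have hmod : ∀ x t, φ x ≤ φ (x - t) * ψ t ^ p := fun x t => by
    have := le_mul_exp_norm_sub_of_norm_fderiv_le (hφ1.differentiable one_ne_zero) hφ0
      (fun y => norm_gradient_eq_norm_fderiv φ y ▸ hgrad y) x (x - t)
    rwa [sub_sub_cancel, ← div_mul_cancel₀ (Cφ * ‖t‖) hp0.ne', Real.exp_mul] at this
  have hψ_le : ∀ t, |f t| * ψ t ≤ |f t| * (1 + Cφ / p * ‖t‖ *
      (1 + Cφ / p * ‖t‖ * Real.exp (Cφ * ‖t‖ / p))) := fun t => by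
    rw [div_mul_eq_mul_div]
    gcongr
    exact Real.exp_le_one_add_mul_one_add_mul_exp (by positivity)
  calc (∫ x, |∫ t, f t * g (x - t)| ^ p * φ x) ^ (1 / p)
      ≤ (∫ t, |f t| * ψ t) * (∫ x, |g x| ^ p * φ x) ^ (1 / p) :=
        integral_abs_convolution_rpow_mul_le hp hφ0 (fun _ => (Real.exp_pos _).le) hmod
          hφ1.continuous.aemeasurable hgm
          ((hfc.abs.mul hψ).integrable_of_hasCompactSupport hfs.abs.mul_right) hg
    _ ≤ _ := by
        refine mul_le_mul_of_nonneg_right (integral_mono_of_nonneg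
          (.of_forall fun t => by positivity) ?_ (.of_forall hψ_le))
          (Real.rpow_nonneg (integral_nonneg fun x => by positivity [hφ0 x]) _)
        exact (by fun_prop : Continuous _).integrable_of_hasCompactSupport hfs.abs.mul_right

theorem stmt4 (d : ℕ) (Cφ p : ℝ) (hC : 0 ≤ Cφ) (hp : 1 ≤ p)
    (φ : EuclideanSpace ℝ (Fin d) → ℝ) (hφ1 : ContDiff ℝ 1 φ)
    (hφ0 : ∀ x, 0 ≤ φ x) (hφi : Integrable φ) (hφne : φ ≠ 0)
    (hgrad : ∀ x, ‖gradient φ x‖ ≤ Cφ * φ x)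
    (f g : EuclideanSpace ℝ (Fin d) → ℝ)
    (hfc : Continuous f) (hfs : HasCompactSupport f)
    (hgm : AEStronglyMeasurable g volume)
    (hg : Integrable (fun x => |g x| ^ p * φ x)) :
    (∫ x, |∫ t, f t * g (x - t)| ^ p * φ x) ^ (1 / p) ≤
      (∫ x, |f x| * (1 + Cφ / p * ‖x‖ *
          (1 + Cφ / p * ‖x‖ * Real.exp (Cφ * ‖x‖ / p)))) *
        (∫ x, |g x| ^ p * φ x) ^ (1 / p) :=
  stmt4_general d Cφ p hC hp φ hφ1 hφ0 hgrad f g hfc hfs hgm hg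
end

section
/- Let φ ∈ 𝔑 with constant C_φ and let J be a smooth nonnegative mollifier supported in the unit ball with ∫J = 1. Set φ_δ = φ ⋆ J_δ where J_δ(x) = δ^{-d} J(x/δ). Then φ_δ ∈ C¹(ℝ^d) ∩ L¹(ℝ^d) and |∇φ_δ(x)| ≤ C_φ φ_δ(x) for all x; i.e., φ_δ ∈ 𝔑 with the same constant C_φ. -/
open MeasureTheory
open scoped Convolution Real Set Filter
lemma auxA {d : ℕ} {C : ℝ} {f : EuclideanSpace ℝ (Fin d) → ℝ}
    (hf : ContDiff ℝ 1 f) (h0 : ∀ x, 0 ≤ f x)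
    (hg : ∀ x, ‖gradient f x‖ ≤ C * f x) (x v : EuclideanSpace ℝ (Fin d)) :
    f (x + v) ≤ Real.exp (C * ‖v‖) * f x := by
  set g : ℝ → ℝ := fun t => f (x + t • v) with hgdef
  set g' : ℝ → ℝ := fun t => fderiv ℝ f (x + t • v) v with hg'def
  have hnorm : ∀ y, ‖fderiv ℝ f y‖ = ‖gradient f y‖ := by
    intro y
    rw [gradient]
    exact ((InnerProductSpace.toDual ℝ _).symm.norm_map _).symm
  have hd : ∀ t : ℝ, HasDerivAt g (g' t) t := by
    intro t
    have h1 : HasDerivAt (fun t : ℝ => x + t • v) v t := by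
      simpa using ((hasDerivAt_id t).smul_const v).const_add x
    exact ((hf.differentiable one_ne_zero) (x + t • v)).hasFDerivAt.comp_hasDerivAt t h1
  have cont : ContinuousOn g (Set.Icc 0 1) :=
    (hf.continuous.comp (by continuity)).continuousOn
  have bound : ∀ t ∈ Set.Ico (0:ℝ) 1, ‖g' t‖ ≤ C * ‖v‖ * ‖g t‖ + 0 := by
    intro t _
    have h2 : ‖g' t‖ ≤ ‖fderiv ℝ f (x + t • v)‖ * ‖v‖ :=
      (fderiv ℝ f (x + t • v)).le_opNorm v
    have h3 : ‖fderiv ℝ f (x + t • v)‖ ≤ C * f (x + t • v) := by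
      rw [hnorm]; exact hg _
    calc ‖g' t‖ ≤ (C * f (x + t • v)) * ‖v‖ :=
          le_trans h2 (mul_le_mul_of_nonneg_right h3 (norm_nonneg v))
      _ = C * ‖v‖ * ‖g t‖ + 0 := by
          rw [hgdef]; dsimp only; rw [Real.norm_eq_abs, abs_of_nonneg (h0 _)]; ring
  have key := norm_le_gronwallBound_of_norm_deriv_right_le (f := g) (f' := g')
      (δ := f x) (K := C * ‖v‖) (ε := 0) (a := 0) (b := 1) cont
      (fun t _ => (hd t).hasDerivWithinAt)
      (by simp [hgdef, Real.norm_eq_abs, abs_of_nonneg (h0 x)]) bound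
  have h1 := key 1 ⟨zero_le_one, le_rfl⟩
  rw [gronwallBound_ε0] at h1
  have hg1 : g 1 = f (x + v) := by simp [hgdef]
  calc f (x + v) = g 1 := hg1.symm
    _ ≤ ‖g 1‖ := le_abs_self _
    _ ≤ f x * Real.exp (C * ‖v‖ * (1 - 0)) := h1
    _ = Real.exp (C * ‖v‖) * f x := by rw [mul_comm]; norm_num

lemma auxB {d : ℕ} {C : ℝ} (hC : 0 ≤ C) {f : EuclideanSpace ℝ (Fin d) → ℝ}
    {x : EuclideanSpace ℝ (Fin d)} (hd : DifferentiableAt ℝ f x)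
    (h0 : ∀ y, 0 ≤ f y)
    (hexp : ∀ y v, f (y + v) ≤ Real.exp (C * ‖v‖) * f y) :
    ‖gradient f x‖ ≤ C * f x := by
  set g := gradient f x with hgdef
  by_cases hg : g = 0
  · rw [hg]; simpa using mul_nonneg hC (h0 x)
  have hng : 0 < ‖g‖ := norm_pos_iff.mpr hg
  have hfd : fderiv ℝ f x g = ‖g‖ ^ 2 := by
    have ht : InnerProductSpace.toDual ℝ _ g = fderiv ℝ f x := by
      rw [hgdef, gradient, LinearIsometryEquiv.apply_symm_apply]
    rw [← ht, InnerProductSpace.toDual_apply_apply, real_inner_self_eq_norm_sq]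
  have hder : HasDerivAt (fun t : ℝ => f (x + t • g)) (‖g‖ ^ 2) 0 := by
    have h1 : HasDerivAt (fun t : ℝ => x + t • g) g 0 := by
      simpa using ((hasDerivAt_id (0:ℝ)).smul_const g).const_add x
    have hx : x + (0:ℝ) • g = x := by simp
    have h2 := hd.hasFDerivAt
    rw [← hx] at h2
    have := h2.comp_hasDerivAt 0 h1
    rw [hx] at this
    rwa [hfd] at this
  set ψ : ℝ → ℝ := fun t => f x * Real.exp (C * ‖g‖ * t) - f (x + t • g) with hψdef
  have hψd : HasDerivAt ψ (f x * (C * ‖g‖) - ‖g‖ ^ 2) 0 := by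
    have he : HasDerivAt (fun t : ℝ => Real.exp (C * ‖g‖ * t)) (C * ‖g‖) 0 := by
      simpa using ((hasDerivAt_id (0:ℝ)).const_mul (C * ‖g‖)).exp
    exact (he.const_mul (f x)).sub hder
  have hnn : ∀ t ∈ Set.Ioi (0:ℝ), 0 ≤ slope ψ 0 t := by
    intro t ht
    have h1 : f (x + t • g) ≤ Real.exp (C * ‖g‖ * t) * f x := by
      have h2 := hexp x (t • g)
      rwa [norm_smul, Real.norm_eq_abs, abs_of_pos ht,
        show C * (t * ‖g‖) = C * ‖g‖ * t by ring] at h2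
    have h3 : 0 ≤ ψ t := by rw [hψdef]; dsimp only; linarith [mul_comm (f x) (Real.exp (C * ‖g‖ * t))]
    have hψ0 : ψ 0 = 0 := by simp [hψdef]
    rw [slope_def_field, hψ0]
    apply div_nonneg <;> simp_all <;> linarith [ht]
  have htend := hasDerivAt_iff_tendsto_slope.mp hψd
  have hmono : Filter.Tendsto (slope ψ 0) (nhdsWithin 0 (Set.Ioi 0))
      (nhds (f x * (C * ‖g‖) - ‖g‖ ^ 2)) :=
    htend.mono_left (nhdsWithin_mono 0 fun t ht => Set.mem_compl_singleton_iff.mpr (ne_of_gt ht))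
  have hD : 0 ≤ f x * (C * ‖g‖) - ‖g‖ ^ 2 :=
    ge_of_tendsto hmono (eventually_nhdsWithin_of_forall hnn)
  have hfin : ‖g‖ * ‖g‖ ≤ (C * f x) * ‖g‖ := by nlinarith
  exact le_of_mul_le_mul_right hfin hng

theorem stmt6 (d : ℕ) (Cφ δ : ℝ) (hC : 0 ≤ Cφ) (hδ : 0 < δ)
    (φ : EuclideanSpace ℝ (Fin d) → ℝ) (hφ1 : ContDiff ℝ 1 φ)
    (hφ0 : ∀ x, 0 ≤ φ x) (hφi : Integrable φ) (hφne : φ ≠ 0)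
    (hgrad : ∀ x, ‖gradient φ x‖ ≤ Cφ * φ x)
    (J : EuclideanSpace ℝ (Fin d) → ℝ) (hJ : ContDiff ℝ (⊤ : ℕ∞) J)
    (hJ0 : ∀ x, 0 ≤ J x) (hJsupp : Function.support J ⊆ Metric.ball 0 1)
    (hJint : (∫ x, J x) = 1)
    (φδ : EuclideanSpace ℝ (Fin d) → ℝ)
    (hφδ : ∀ x, φδ x = ∫ y, φ (x - y) * ((δ ^ d)⁻¹ * J (δ⁻¹ • y))) :
    ContDiff ℝ 1 φδ ∧ Integrable φδ ∧ ∀ x, ‖gradient φδ x‖ ≤ Cφ * φδ x := by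
  set Jδ : EuclideanSpace ℝ (Fin d) → ℝ := fun y => (δ ^ d)⁻¹ * J (δ⁻¹ • y) with hJδdef
  have hJδ0 : ∀ y, 0 ≤ Jδ y := fun y =>
    mul_nonneg (inv_nonneg.mpr (pow_nonneg hδ.le d)) (hJ0 _)
  have hJδc : HasCompactSupport Jδ := by
    apply HasCompactSupport.intro (isCompact_closedBall (0 : EuclideanSpace ℝ (Fin d)) δ)
    intro y hy
    have hyn : δ < ‖y‖ := by
      simpa [Metric.mem_closedBall, dist_zero_right] using hy
    have hJ0' : J (δ⁻¹ • y) = 0 := by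
      by_contra h
      have hmem := hJsupp h
      rw [Metric.mem_ball, dist_zero_right, norm_smul, Real.norm_eq_abs,
        abs_of_pos (inv_pos.mpr hδ)] at hmem
      have h1 : δ * (δ⁻¹ * ‖y‖) < δ * 1 := mul_lt_mul_of_pos_left hmem hδ
      rw [← mul_assoc, mul_inv_cancel₀ hδ.ne', one_mul, mul_one] at h1
      linarith
    simp [hJδdef, hJ0']
  have hJδsm : ContDiff ℝ 1 Jδ :=
    (contDiff_const.mul (hJ.of_le (by simp) |>.comp (contDiff_id.const_smul δ⁻¹)))
  have hconv : φδ = Jδ ⋆[ContinuousLinearMap.mul ℝ ℝ] φ := by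
    funext x
    rw [hφδ x, convolution_def]
    simp only [ContinuousLinearMap.mul_apply']
    rw [show (fun y => φ (x - y) * Jδ y) = fun y => Jδ y * φ (x - y) from
      funext fun y => mul_comm _ _]
  have h1 : ContDiff ℝ 1 φδ := by
    rw [hconv]
    exact hJδc.contDiff_convolution_left _ hJδsm hφi.locallyIntegrable
  have hJδi : Integrable Jδ := hJδsm.continuous.integrable_of_hasCompactSupport hJδc
  have h2 : Integrable φδ := by
    rw [hconv]
    exact hJδi.integrable_convolution _ hφi
  have h0δ : ∀ x, 0 ≤ φδ x := fun x => by
    rw [hφδ]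
    exact integral_nonneg fun y => mul_nonneg (hφ0 _) (hJδ0 y)
  have hintx : ∀ x, Integrable (fun y => φ (x - y) * Jδ y) := by
    intro x
    have := hJδc.convolutionExists_left (L := ContinuousLinearMap.mul ℝ ℝ) hJδsm.continuous
      hφi.locallyIntegrable x
    simp only [ConvolutionExistsAt, ContinuousLinearMap.mul_apply'] at this
    exact this.congr (Filter.Eventually.of_forall fun y => mul_comm _ _)
  have hexpφ : ∀ x v, φ (x + v) ≤ Real.exp (Cφ * ‖v‖) * φ x := auxA hφ1 hφ0 hgrad
  have hexpδ : ∀ x v, φδ (x + v) ≤ Real.exp (Cφ * ‖v‖) * φδ x := by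
    intro x v
    rw [hφδ, hφδ]
    have hmono : (∫ y, φ (x + v - y) * Jδ y) ≤ ∫ y, Real.exp (Cφ * ‖v‖) * (φ (x - y) * Jδ y) := by
      apply integral_mono
      · exact hintx (x + v)
      · exact (hintx x).const_mul _
      · intro y
        have := mul_le_mul_of_nonneg_right
          (hexpφ (x - y) v) (hJδ0 y)
        rw [sub_add_eq_add_sub] at this
        calc φ (x + v - y) * Jδ y ≤ Real.exp (Cφ * ‖v‖) * φ (x - y) * Jδ y := this
          _ = Real.exp (Cφ * ‖v‖) * (φ (x - y) * Jδ y) := mul_assoc _ _ _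
    calc (∫ y, φ (x + v - y) * Jδ y) ≤ ∫ y, Real.exp (Cφ * ‖v‖) * (φ (x - y) * Jδ y) := hmono
      _ = Real.exp (Cφ * ‖v‖) * ∫ y, φ (x - y) * Jδ y := integral_const_mul _ _
  refine ⟨h1, h2, fun x => auxB hC ((h1.differentiable one_ne_zero) x) h0δ hexpδ⟩
end

section
/- Let φ ∈ 𝔑 with constant C_φ, J a standard mollifier, φ_δ = φ ⋆ J_δ, and 1 ≤ p < ∞. Then for every u ∈ L^p(ℝ^d, φ): | ‖u‖_{p,φ}^p − ‖u‖_{p,φ_δ}^p | ≤ w_{1,φ}(δ) · min{ ‖u‖_{p,φ}^p , ‖u‖_{p,φ_δ}^p }, where w_{1,φ}(r) = C_φ r (1 + C_φ r e^{C_φ r}). -/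
open MeasureTheory

lemma aux_norm_fderiv (d : ℕ) (φ : EuclideanSpace ℝ (Fin d) → ℝ) (y : EuclideanSpace ℝ (Fin d)) :
    ‖fderiv ℝ φ y‖ = ‖gradient φ y‖ :=
  ((InnerProductSpace.toDual ℝ _).symm.norm_map (fderiv ℝ φ y)).symm

lemma aux1 (d : ℕ) (Cφ : ℝ) (φ : EuclideanSpace ℝ (Fin d) → ℝ)
    (hφ1 : ContDiff ℝ 1 φ) (hφ0 : ∀ x, 0 ≤ φ x)
    (hgrad : ∀ x, ‖gradient φ x‖ ≤ Cφ * φ x) (x z : EuclideanSpace ℝ (Fin d)) :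
    φ (x + z) ≤ φ x * Real.exp (Cφ * ‖z‖) := by
  have hdiff := hφ1.differentiable one_ne_zero
  set f : ℝ → ℝ := fun t => φ (x + t • z) with hf
  have hder : ∀ t : ℝ, HasDerivAt f (fderiv ℝ φ (x + t • z) z) t := by
    intro t
    have hc : HasDerivAt (fun t : ℝ => x + t • z) z t :=
      by simpa using ((hasDerivAt_id t).smul_const z).const_add x
    exact (hdiff (x + t • z)).hasFDerivAt.comp_hasDerivAt t hc
  have key := norm_le_gronwallBound_of_norm_deriv_right_le (f := f)
    (f' := fun t => fderiv ℝ φ (x + t • z) z) (δ := φ x) (K := Cφ * ‖z‖) (ε := 0)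
    (a := 0) (b := 1)
    (Continuous.continuousOn (by
      exact hφ1.continuous.comp (continuous_const.add (continuous_id.smul continuous_const))))
    (fun t _ => (hder t).hasDerivWithinAt)
    (by simp [hf, Real.norm_eq_abs, abs_of_nonneg (hφ0 x)])
    (fun t _ => by
      calc ‖fderiv ℝ φ (x + t • z) z‖ ≤ ‖fderiv ℝ φ (x + t • z)‖ * ‖z‖ :=
            (fderiv ℝ φ (x + t • z)).le_opNorm z
        _ ≤ (Cφ * φ (x + t • z)) * ‖z‖ := by
            apply mul_le_mul_of_nonneg_right _ (norm_nonneg z)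
            rw [aux_norm_fderiv]; exact hgrad _
        _ = Cφ * ‖z‖ * ‖f t‖ + 0 := by
            rw [Real.norm_eq_abs, abs_of_nonneg (hφ0 _)]; ring)
  have := key 1 (by norm_num)
  rw [gronwallBound_ε0] at this
  simp only [hf] at this
  rw [Real.norm_eq_abs, abs_of_nonneg (hφ0 _)] at this
  simpa using this

lemma aux2 (d : ℕ) (Cφ : ℝ) (hC : 0 ≤ Cφ) (φ : EuclideanSpace ℝ (Fin d) → ℝ)
    (hφ1 : ContDiff ℝ 1 φ) (hφ0 : ∀ x, 0 ≤ φ x)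
    (hgrad : ∀ x, ‖gradient φ x‖ ≤ Cφ * φ x) (x z : EuclideanSpace ℝ (Fin d)) :
    |φ (x + z) - φ x| ≤ Cφ * Real.exp (Cφ * ‖z‖) * φ x * ‖z‖ := by
  have hdiff := hφ1.differentiable one_ne_zero
  have hconv : Convex ℝ (Metric.closedBall x ‖z‖) := convex_closedBall x ‖z‖
  have key := hconv.norm_image_sub_le_of_norm_fderiv_le (f := φ)
    (C := Cφ * (φ x * Real.exp (Cφ * ‖z‖)))
    (fun y _ => hdiff y)
    (fun y hy => by
      rw [aux_norm_fderiv]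
      calc ‖gradient φ y‖ ≤ Cφ * φ y := hgrad y
        _ ≤ Cφ * (φ x * Real.exp (Cφ * ‖z‖)) := by
            apply mul_le_mul_of_nonneg_left _ hC
            have h1 : φ y = φ (x + (y - x)) := by rw [add_sub_cancel]
            rw [h1]
            calc φ (x + (y - x)) ≤ φ x * Real.exp (Cφ * ‖y - x‖) :=
                  aux1 d Cφ φ hφ1 hφ0 hgrad x (y - x)
              _ ≤ φ x * Real.exp (Cφ * ‖z‖) := by
                  apply mul_le_mul_of_nonneg_left _ (hφ0 x)
                  apply Real.exp_le_exp.2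
                  apply mul_le_mul_of_nonneg_left _ hC
                  simpa [dist_eq_norm] using hy)
    (Metric.mem_closedBall_self (norm_nonneg z))
    (show x + z ∈ Metric.closedBall x ‖z‖ by
      simp [Metric.mem_closedBall, dist_eq_norm])
  calc |φ (x + z) - φ x| = ‖φ (x + z) - φ x‖ := rfl
    _ ≤ Cφ * (φ x * Real.exp (Cφ * ‖z‖)) * ‖x + z - x‖ := key
    _ = Cφ * Real.exp (Cφ * ‖z‖) * φ x * ‖z‖ := by rw [add_sub_cancel_left]; ring

lemma aux3 (d : ℕ) (Cφ δ : ℝ) (hC : 0 ≤ Cφ) (hδ : 0 ≤ δ) (φ : EuclideanSpace ℝ (Fin d) → ℝ)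
    (hφ1 : ContDiff ℝ 1 φ) (hφ0 : ∀ x, 0 ≤ φ x)
    (hgrad : ∀ x, ‖gradient φ x‖ ≤ Cφ * φ x) (x z : EuclideanSpace ℝ (Fin d))
    (hz : ‖z‖ ≤ δ) :
    |φ (x + z) - φ x| ≤ (Cφ * δ * Real.exp (Cφ * δ)) * φ x := by
  calc |φ (x + z) - φ x| ≤ Cφ * Real.exp (Cφ * ‖z‖) * φ x * ‖z‖ :=
        aux2 d Cφ hC φ hφ1 hφ0 hgrad x z
    _ ≤ Cφ * Real.exp (Cφ * δ) * φ x * δ := by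
        gcongr <;>
          first
          | exact mul_nonneg (mul_nonneg hC (Real.exp_pos _).le) (hφ0 x)
          | exact Real.exp_le_exp.2 (mul_le_mul_of_nonneg_left hz hC)
          | exact hz
          | exact hφ0 x
    _ = (Cφ * δ * Real.exp (Cφ * δ)) * φ x := by ring

theorem stmt7 (d : ℕ) (Cφ δ p : ℝ) (hC : 0 ≤ Cφ) (hδ : 0 < δ) (hp : 1 ≤ p)
    (φ : EuclideanSpace ℝ (Fin d) → ℝ) (hφ1 : ContDiff ℝ 1 φ)
    (hφ0 : ∀ x, 0 ≤ φ x) (hφi : Integrable φ) (hφne : φ ≠ 0)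
    (hgrad : ∀ x, ‖gradient φ x‖ ≤ Cφ * φ x)
    (J : EuclideanSpace ℝ (Fin d) → ℝ) (hJ : ContDiff ℝ (⊤ : ℕ∞) J)
    (hJ0 : ∀ x, 0 ≤ J x) (hJsupp : Function.support J ⊆ Metric.ball 0 1)
    (hJint : (∫ x, J x) = 1)
    (φδ : EuclideanSpace ℝ (Fin d) → ℝ)
    (hφδ : ∀ x, φδ x = ∫ y, φ (x - y) * ((δ ^ d)⁻¹ * J (δ⁻¹ • y)))
    (u : EuclideanSpace ℝ (Fin d) → ℝ)
    (hum : AEStronglyMeasurable u volume)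
    (hu : Integrable (fun x => |u x| ^ p * φ x)) :
    |(∫ x, |u x| ^ p * φ x) - ∫ x, |u x| ^ p * φδ x| ≤
      (Cφ * δ * (1 + Cφ * δ * Real.exp (Cφ * δ))) *
        min (∫ x, |u x| ^ p * φ x) (∫ x, |u x| ^ p * φδ x) := by
  set w : ℝ := Cφ * δ * Real.exp (Cφ * δ) with hw
  have hw0 : 0 ≤ w := by positivity
  set Jδ : EuclideanSpace ℝ (Fin d) → ℝ := fun y => (δ ^ d)⁻¹ * J (δ⁻¹ • y) with hJδdef
  have hδd : (0:ℝ) < δ ^ d := pow_pos hδ d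
  have hJδ0 : ∀ y, 0 ≤ Jδ y := fun y => mul_nonneg (inv_nonneg.2 hδd.le) (hJ0 _)
  have hJδsupp : ∀ y : EuclideanSpace ℝ (Fin d), δ ≤ ‖y‖ → Jδ y = 0 := by
    intro y hy
    have : J (δ⁻¹ • y) = 0 := by
      by_contra h
      have := hJsupp (Function.mem_support.2 h)
      rw [Metric.mem_ball, dist_zero_right, norm_smul, norm_inv, Real.norm_eq_abs,
        abs_of_pos hδ] at this
      have : ‖y‖ < δ := by
        have := (inv_mul_lt_iff₀ hδ).1 this
        simpa using this
      linarith
    simp [hJδdef, this]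
  have hJδcont : Continuous Jδ :=
    continuous_const.mul (hJ.continuous.comp (continuous_const_smul _))
  have hJδcs : HasCompactSupport Jδ := by
    apply HasCompactSupport.intro (isCompact_closedBall (0 : EuclideanSpace ℝ (Fin d)) δ)
    intro y hy
    apply hJδsupp
    by_contra h
    exact hy (Metric.mem_closedBall.2 (by rw [dist_zero_right]; linarith))
  have hJδi : Integrable Jδ := hJδcont.integrable_of_hasCompactSupport hJδcs
  have hJδint : (∫ y, Jδ y) = 1 := by
    have h1 : (∫ y : EuclideanSpace ℝ (Fin d), J (δ⁻¹ • y)) = |δ ^ (Module.finrank ℝ (EuclideanSpace ℝ (Fin d)))| • ∫ y, J y :=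
      MeasureTheory.Measure.integral_comp_inv_smul volume J δ
    rw [finrank_euclideanSpace_fin, hJint] at h1
    rw [hJδdef]
    rw [integral_const_mul, h1]
    simp [abs_of_pos hδd, inv_mul_cancel₀ hδd.ne']
  -- integrability of the shifted product
  have hshift : ∀ x : EuclideanSpace ℝ (Fin d),
      Integrable (fun y => φ (x - y) * Jδ y) := by
    intro x
    apply Continuous.integrable_of_hasCompactSupport
    · exact (hφ1.continuous.comp (continuous_const.sub continuous_id)).mul hJδcont
    · exact hJδcs.mul_left
  -- pointwise difference bound for shifted φ
  have hptw : ∀ x y : EuclideanSpace ℝ (Fin d),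
      |φ (x - y) - φ x| * Jδ y ≤ w * φ x * Jδ y ∧
      |φ (x - y) - φ x| * Jδ y ≤ w * φ (x - y) * Jδ y := by
    intro x y
    rcases le_or_gt δ ‖y‖ with h | h
    · simp [hJδsupp y h]
    · constructor
      · apply mul_le_mul_of_nonneg_right _ (hJδ0 y)
        have := aux3 d Cφ δ hC hδ.le φ hφ1 hφ0 hgrad x (-y) (by simpa using h.le)
        simpa [sub_eq_add_neg] using this
      · apply mul_le_mul_of_nonneg_right _ (hJδ0 y)
        have := aux3 d Cφ δ hC hδ.le φ hφ1 hφ0 hgrad (x - y) y h.le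
        rw [sub_add_cancel] at this
        rw [abs_sub_comm] at this
        exact this
  -- key pointwise bounds on φδ
  have hbound1 : ∀ x, |φδ x - φ x| ≤ w * φ x := by
    intro x
    have heq : φδ x - φ x = ∫ y, (φ (x - y) * Jδ y - φ x * Jδ y) := by
      rw [integral_sub (hshift x) (hJδi.const_mul (φ x)), hφδ x,
        integral_const_mul, hJδint, mul_one]
    rw [heq]
    calc |∫ y, (φ (x - y) * Jδ y - φ x * Jδ y)|
        ≤ ∫ y, |φ (x - y) * Jδ y - φ x * Jδ y| :=
          by simpa [Real.norm_eq_abs] using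
            norm_integral_le_integral_norm (fun y => φ (x - y) * Jδ y - φ x * Jδ y)
      _ ≤ ∫ y, w * φ x * Jδ y := by
          apply integral_mono ((hshift x).sub (hJδi.const_mul (φ x))).abs
            ((hJδi.const_mul (w * φ x)))
          intro y
          calc |φ (x - y) * Jδ y - φ x * Jδ y| = |φ (x - y) - φ x| * Jδ y := by
                rw [← sub_mul, abs_mul, abs_of_nonneg (hJδ0 y)]
            _ ≤ w * φ x * Jδ y := (hptw x y).1
      _ = w * φ x := by rw [integral_const_mul, hJδint, mul_one]
  have hbound2 : ∀ x, |φδ x - φ x| ≤ w * φδ x := by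
    intro x
    have heq : φδ x - φ x = ∫ y, (φ (x - y) * Jδ y - φ x * Jδ y) := by
      rw [integral_sub (hshift x) (hJδi.const_mul (φ x)), hφδ x,
        integral_const_mul, hJδint, mul_one]
    rw [heq]
    calc |∫ y, (φ (x - y) * Jδ y - φ x * Jδ y)|
        ≤ ∫ y, |φ (x - y) * Jδ y - φ x * Jδ y| :=
          by simpa [Real.norm_eq_abs] using
            norm_integral_le_integral_norm (fun y => φ (x - y) * Jδ y - φ x * Jδ y)
      _ ≤ ∫ y, w * (φ (x - y) * Jδ y) := by
          apply integral_mono ((hshift x).sub (hJδi.const_mul (φ x))).abs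
            ((hshift x).const_mul w)
          intro y
          calc |φ (x - y) * Jδ y - φ x * Jδ y| = |φ (x - y) - φ x| * Jδ y := by
                rw [← sub_mul, abs_mul, abs_of_nonneg (hJδ0 y)]
            _ ≤ w * (φ (x - y) * Jδ y) := by
                have := (hptw x y).2; linarith [this]
      _ = w * φδ x := by rw [integral_const_mul, hφδ x]
  -- continuity of φδ via convolution
  have hφδcont : Continuous φδ := by
    have heq : φδ = MeasureTheory.convolution φ Jδ (ContinuousLinearMap.mul ℝ ℝ) volume := by
      funext x
      rw [hφδ x, MeasureTheory.convolution_def]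
      simp only [ContinuousLinearMap.mul_apply']
      rw [← MeasureTheory.integral_sub_left_eq_self (fun t => φ t * Jδ (x - t)) volume x]
      simp [sub_sub_cancel]
      rfl
    rw [heq]
    exact hJδcs.continuous_convolution_right _ hφi.locallyIntegrable hJδcont
  have hup : ∀ x, 0 ≤ |u x| ^ p := fun x => Real.rpow_nonneg (abs_nonneg _) p
  have hφδ0 : ∀ x, 0 ≤ φδ x := fun x => by
    rw [hφδ x]
    exact integral_nonneg fun y => mul_nonneg (hφ0 _)
      (mul_nonneg (inv_nonneg.2 hδd.le) (hJ0 _))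
  have humeas : AEStronglyMeasurable (fun x => |u x| ^ p) volume := by
    have ham : AEMeasurable u volume := hum.aemeasurable
    have : AEMeasurable (fun x => |u x| ^ p) volume := by fun_prop
    exact this.aestronglyMeasurable
  have hub : Integrable (fun x => |u x| ^ p * φδ x) := by
    apply Integrable.mono' (hu.const_mul (1 + w))
      (show AEStronglyMeasurable (fun x => |u x| ^ p * φδ x) volume from
        humeas.mul hφδcont.aestronglyMeasurable)
    refine Filter.Eventually.of_forall fun x => ?_
    rw [Real.norm_eq_abs, abs_of_nonneg (mul_nonneg (hup x) (hφδ0 x))]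
    have h1 : φδ x ≤ (1 + w) * φ x := by nlinarith [abs_le.1 (hbound1 x)]
    calc |u x| ^ p * φδ x ≤ |u x| ^ p * ((1 + w) * φ x) :=
          mul_le_mul_of_nonneg_left h1 (hup x)
      _ = (1 + w) * (|u x| ^ p * φ x) := by ring
  set A := ∫ x, |u x| ^ p * φ x with hA
  set B := ∫ x, |u x| ^ p * φδ x with hB
  have hA0 : 0 ≤ A := integral_nonneg fun x => mul_nonneg (hup x) (hφ0 x)
  have hB0 : 0 ≤ B := integral_nonneg fun x => mul_nonneg (hup x) (hφδ0 x)
  have habs : ∀ x, |(|u x| ^ p * φ x - |u x| ^ p * φδ x)| = |u x| ^ p * |φ x - φδ x| :=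
    fun x => by rw [← mul_sub, abs_mul, abs_of_nonneg (hup x)]
  have key1 : |A - B| ≤ w * A := by
    rw [hA, hB, ← integral_sub hu hub]
    calc |∫ x, (|u x| ^ p * φ x - |u x| ^ p * φδ x)|
        ≤ ∫ x, |(|u x| ^ p * φ x - |u x| ^ p * φδ x)| := by
          simpa [Real.norm_eq_abs] using
            norm_integral_le_integral_norm (fun x => |u x| ^ p * φ x - |u x| ^ p * φδ x)
      _ ≤ ∫ x, w * (|u x| ^ p * φ x) := by
          apply integral_mono (hu.sub hub).abs (hu.const_mul w)
          intro x
          simp only [Pi.sub_apply]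
          rw [habs x]
          calc |u x| ^ p * |φ x - φδ x| ≤ |u x| ^ p * (w * φ x) := by
                apply mul_le_mul_of_nonneg_left _ (hup x)
                rw [abs_sub_comm]; exact hbound1 x
            _ = w * (|u x| ^ p * φ x) := by ring
      _ = w * A := by rw [integral_const_mul, hA]
  have key2 : |A - B| ≤ w * B := by
    rw [hA, hB, ← integral_sub hu hub]
    calc |∫ x, (|u x| ^ p * φ x - |u x| ^ p * φδ x)|
        ≤ ∫ x, |(|u x| ^ p * φ x - |u x| ^ p * φδ x)| := by
          simpa [Real.norm_eq_abs] using
            norm_integral_le_integral_norm (fun x => |u x| ^ p * φ x - |u x| ^ p * φδ x)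
      _ ≤ ∫ x, w * (|u x| ^ p * φδ x) := by
          apply integral_mono (hu.sub hub).abs (hub.const_mul w)
          intro x
          simp only [Pi.sub_apply]
          rw [habs x]
          calc |u x| ^ p * |φ x - φδ x| ≤ |u x| ^ p * (w * φδ x) := by
                apply mul_le_mul_of_nonneg_left _ (hup x)
                rw [abs_sub_comm]; exact hbound2 x
            _ = w * (|u x| ^ p * φδ x) := by ring
      _ = w * B := by rw [integral_const_mul, hB]
  have hwW : w ≤ Cφ * δ * (1 + Cφ * δ * Real.exp (Cφ * δ)) := by
    have hs : 0 ≤ Cφ * δ := mul_nonneg hC hδ.le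
    have h2 : (1 - Cφ * δ) * Real.exp (Cφ * δ) ≤ 1 := by
      have h := Real.add_one_le_exp (-(Cφ * δ))
      rw [Real.exp_neg] at h
      have h3 := mul_le_mul_of_nonneg_right h (Real.exp_pos (Cφ * δ)).le
      rw [inv_mul_cancel₀ (Real.exp_pos (Cφ * δ)).ne'] at h3
      nlinarith [h3]
    have h4 : Real.exp (Cφ * δ) ≤ 1 + Cφ * δ * Real.exp (Cφ * δ) := by nlinarith [h2]
    calc w = Cφ * δ * Real.exp (Cφ * δ) := hw
      _ ≤ Cφ * δ * (1 + Cφ * δ * Real.exp (Cφ * δ)) := mul_le_mul_of_nonneg_left h4 hs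
  have hmin : 0 ≤ min A B := le_min hA0 hB0
  calc |A - B| ≤ min (w * A) (w * B) := le_min key1 key2
    _ = w * min A B := (mul_min_of_nonneg A B hw0).symm
    _ ≤ (Cφ * δ * (1 + Cφ * δ * Real.exp (Cφ * δ))) * min A B :=
        mul_le_mul_of_nonneg_right hwW hmin
end

section
/- Let φ ∈ 𝔑 with constant C_φ, J a standard smooth mollifier, and φ_δ = φ ⋆ J_δ. Then for all x ∈ ℝ^d: |Δφ_δ(x)| ≤ δ^{-1} C_φ ‖∇J‖_{L¹(ℝ^d)} (1 + w_{1,φ}(δ))² φ_δ(x), where w_{1,φ}(r) = C_φ r (1 + C_φ r e^{C_φ r}). -/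
open MeasureTheory

lemma aux_exp_le {t : ℝ} (ht : 0 ≤ t) :
    Real.exp t ≤ 1 + t * (1 + t * Real.exp t) := by
  have h1 : 1 - t ≤ Real.exp (-t) := by
    have := Real.add_one_le_exp (-t); linarith
  have h2 : Real.exp t * (1 - t) ≤ 1 := by
    calc Real.exp t * (1 - t) ≤ Real.exp t * Real.exp (-t) :=
          mul_le_mul_of_nonneg_left h1 (Real.exp_pos t).le
      _ = 1 := by rw [← Real.exp_add]; simp
  have h3 : t * (Real.exp t * (1 - t)) ≤ t * 1 := mul_le_mul_of_nonneg_left h2 ht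
  nlinarith [Real.exp_pos t]

lemma aux_harnack {E : Type*} [NormedAddCommGroup E] [NormedSpace ℝ E]
    {C : ℝ} {φ : E → ℝ} (hφ1 : Differentiable ℝ φ) (hφ0 : ∀ x, 0 ≤ φ x)
    (hfd : ∀ z, ‖fderiv ℝ φ z‖ ≤ C * φ z) (a v : E) :
    φ (a + v) ≤ Real.exp (C * ‖v‖) * φ a := by
  have hd : ∀ t : ℝ, HasDerivAt (fun t : ℝ => φ (a + t • v)) (fderiv ℝ φ (a + t • v) v) t := by
    intro t
    have h2 : HasDerivAt (fun t : ℝ => a + t • v) v t := by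
      simpa using ((hasDerivAt_id t).smul_const v).const_add a
    exact (hφ1 (a + t • v)).hasFDerivAt.comp_hasDerivAt t h2
  have hcont : ContinuousOn (fun t : ℝ => φ (a + t • v)) (Set.Icc 0 1) :=
    (hφ1.continuous.comp (continuous_const.add (continuous_id.smul continuous_const))).continuousOn
  have key := norm_le_gronwallBound_of_norm_deriv_right_le
    (f := fun t : ℝ => φ (a + t • v)) (f' := fun t : ℝ => fderiv ℝ φ (a + t • v) v)
    (a := 0) (b := 1) (δ := φ a) (K := C * ‖v‖) (ε := 0)
    hcont (fun t _ => (hd t).hasDerivWithinAt)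
    (by simp [Real.norm_eq_abs, abs_of_nonneg (hφ0 a)])
    (fun t _ => by
      have h4 := (fderiv ℝ φ (a + t • v)).le_opNorm v
      have h5 := mul_le_mul_of_nonneg_right (hfd (a + t • v)) (norm_nonneg v)
      calc ‖(fderiv ℝ φ (a + t • v)) v‖ ≤ C * φ (a + t • v) * ‖v‖ := le_trans h4 h5
        _ = C * ‖v‖ * ‖φ (a + t • v)‖ + 0 := by
              rw [Real.norm_eq_abs, abs_of_nonneg (hφ0 _)]; ring)
    1 ⟨zero_le_one, le_refl 1⟩
  rw [gronwallBound_ε0] at key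
  rw [Real.norm_eq_abs, abs_of_nonneg (hφ0 _)] at key
  simpa [mul_comm] using key

open Convolution
set_option maxHeartbeats 1000000 in
set_option synthInstance.maxHeartbeats 400000 in

theorem stmt8 (d : ℕ) (Cφ δ : ℝ) (hC : 0 ≤ Cφ) (hδ : 0 < δ)
    (φ : EuclideanSpace ℝ (Fin d) → ℝ) (hφ1 : ContDiff ℝ 1 φ)
    (hφ0 : ∀ x, 0 ≤ φ x) (hφi : Integrable φ) (hφne : φ ≠ 0)
    (hgrad : ∀ x, ‖gradient φ x‖ ≤ Cφ * φ x)
    (J : EuclideanSpace ℝ (Fin d) → ℝ) (hJ : ContDiff ℝ (⊤ : ℕ∞) J)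
    (hJ0 : ∀ x, 0 ≤ J x) (hJsupp : Function.support J ⊆ Metric.ball 0 1)
    (hJint : (∫ x, J x) = 1)
    (φδ : EuclideanSpace ℝ (Fin d) → ℝ)
    (hφδ : ∀ x, φδ x = ∫ y, φ (x - y) * ((δ ^ d)⁻¹ * J (δ⁻¹ • y)))
    (x : EuclideanSpace ℝ (Fin d)) :
    |∑ i : Fin d, fderiv ℝ (fun y => fderiv ℝ φδ y (EuclideanSpace.single i (1 : ℝ))) x
        (EuclideanSpace.single i (1 : ℝ))| ≤
      δ⁻¹ * Cφ * (∫ y, ‖gradient J y‖) *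
        (1 + Cφ * δ * (1 + Cφ * δ * Real.exp (Cφ * δ))) ^ 2 * φδ x := by
  set g : EuclideanSpace ℝ (Fin d) → ℝ := fun y => (δ ^ d)⁻¹ * J (δ⁻¹ • y) with hg_def
  -- norm of gradient = norm of fderiv
  have hng : ∀ (f : EuclideanSpace ℝ (Fin d) → ℝ) (z : EuclideanSpace ℝ (Fin d)), ‖gradient f z‖ = ‖fderiv ℝ f z‖ := by
    intro f z
    rw [show gradient f z = (InnerProductSpace.toDual ℝ (EuclideanSpace ℝ (Fin d))).symm (fderiv ℝ f z) from rfl]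
    exact LinearIsometryEquiv.norm_map _ _
  have hfd : ∀ z, ‖fderiv ℝ φ z‖ ≤ Cφ * φ z := fun z => (hng φ z) ▸ hgrad z
  have hφd : Differentiable ℝ φ := hφ1.differentiable one_ne_zero
  -- smoothness of g
  have hgsm : ContDiff ℝ 1 g :=
    contDiff_const.mul ((hJ.of_le (by simp)).comp (contDiff_const_smul δ⁻¹))
  have hgc : Continuous g := hgsm.continuous
  -- support of g
  have hgsupp : Function.support g ⊆ Metric.ball (0 : EuclideanSpace ℝ (Fin d)) δ := by
    intro y hy
    have : J (δ⁻¹ • y) ≠ 0 := by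
      intro h; apply hy; simp [hg_def, h]
    have h2 : δ⁻¹ • y ∈ Metric.ball (0 : EuclideanSpace ℝ (Fin d)) 1 := hJsupp this
    simp only [Metric.mem_ball, dist_zero_right] at h2 ⊢
    have : ‖δ⁻¹ • y‖ = δ⁻¹ * ‖y‖ := by
      rw [norm_smul, Real.norm_eq_abs, abs_of_nonneg (inv_nonneg.2 hδ.le)]
    rw [this] at h2
    calc ‖y‖ = δ * (δ⁻¹ * ‖y‖) := by field_simp
      _ < δ * 1 := by exact mul_lt_mul_of_pos_left h2 hδ
      _ = δ := mul_one δ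
  have hgcs : HasCompactSupport g :=
    HasCompactSupport.of_support_subset_isCompact (isCompact_closedBall (0 : EuclideanSpace ℝ (Fin d)) δ)
      (hgsupp.trans Metric.ball_subset_closedBall)
  have hg0 : ∀ y, 0 ≤ g y := fun y =>
    mul_nonneg (inv_nonneg.2 (pow_nonneg hδ.le d)) (hJ0 _)
  -- fderiv of g
  have hgfd : ∀ y, fderiv ℝ g y = ((δ ^ d)⁻¹ * δ⁻¹) • fderiv ℝ J (δ⁻¹ • y) := by
    intro y
    have h1 : HasFDerivAt (fun y : EuclideanSpace ℝ (Fin d) => δ⁻¹ • y)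
        (δ⁻¹ • ContinuousLinearMap.id ℝ (EuclideanSpace ℝ (Fin d))) y := (hasFDerivAt_id y).const_smul δ⁻¹
    have h2 : HasFDerivAt (fun y : EuclideanSpace ℝ (Fin d) => J (δ⁻¹ • y))
        ((fderiv ℝ J (δ⁻¹ • y)).comp (δ⁻¹ • ContinuousLinearMap.id ℝ (EuclideanSpace ℝ (Fin d)))) y :=
      ((hJ.differentiable (by simp)) (δ⁻¹ • y)).hasFDerivAt.comp y h1
    have h3 : HasFDerivAt g ((δ ^ d)⁻¹ • ((fderiv ℝ J (δ⁻¹ • y)).comp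
        (δ⁻¹ • ContinuousLinearMap.id ℝ (EuclideanSpace ℝ (Fin d))))) y := h2.const_mul _
    rw [h3.fderiv]
    ext v
    simp [smul_smul, mul_comm]
  have hdim : Module.finrank ℝ (EuclideanSpace ℝ (Fin d)) = d := finrank_euclideanSpace_fin
  have hscale : ∀ (f : EuclideanSpace ℝ (Fin d) → ℝ),
      ∫ y, f (δ⁻¹ • y) = δ ^ d * ∫ y, f y := by
    intro f
    rw [Measure.integral_comp_smul volume f δ⁻¹, hdim, inv_pow, inv_inv,
      abs_of_nonneg (pow_nonneg hδ.le d), smul_eq_mul]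
  have hδd : (0:ℝ) < δ ^ d := pow_pos hδ d
  have hgint : ∫ y, g y = 1 := by
    simp only [hg_def]
    rw [integral_const_mul _ _, hscale J, hJint]
    field_simp
  have hfgint : ∫ y, ‖fderiv ℝ g y‖ = δ⁻¹ * ∫ y, ‖fderiv ℝ J y‖ := by
    have h9 : ∀ y, ‖fderiv ℝ g y‖ = ((δ ^ d)⁻¹ * δ⁻¹) * ‖fderiv ℝ J (δ⁻¹ • y)‖ := by
      intro y
      rw [hgfd y, norm_smul, Real.norm_eq_abs, abs_of_nonneg (by positivity)]
    simp only [h9]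
    rw [integral_const_mul _ _, hscale (fun y => ‖fderiv ℝ J y‖)]
    field_simp
  have hφtr : ∀ x' : EuclideanSpace ℝ (Fin d), Integrable (fun y => φ (x' - y)) := fun x' =>
    (integrable_comp_sub_left φ x').2 hφi
  have key_int : ∀ (x' : EuclideanSpace ℝ (Fin d)) (ψ : EuclideanSpace ℝ (Fin d) → ℝ),
      Continuous ψ → (∃ C, ∀ y, ‖ψ y‖ ≤ C) → Integrable (fun y => φ (x' - y) * ψ y) := by
    intro x' ψ hψc hψb
    have := Integrable.bdd_mul (hφtr x') hψc.aestronglyMeasurable (ae_of_all _ hψb.choose_spec)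
    simpa [mul_comm] using this
  have hgb : ∃ C, ∀ y, ‖g y‖ ≤ C := hgcs.exists_bound_of_continuous hgc
  have hIg : ∀ x', Integrable (fun y => φ (x' - y) * g y) := fun x' => key_int x' g hgc hgb
  have hH : ∀ a v, φ (a + v) ≤ Real.exp (Cφ * ‖v‖) * φ a := aux_harnack hφd hφ0 hfd
  have hcφ : Continuous fun z => fderiv ℝ φ z := hφ1.continuous_fderiv one_ne_zero
  have step1 : ∀ x₀, HasFDerivAt (fun x' => ∫ y, φ (x' - y) * g y)
      (∫ y, g y • fderiv ℝ φ (x₀ - y)) x₀ := by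
    intro x₀
    refine hasFDerivAt_integral_of_dominated_of_fderiv_le
      (bound := fun y => (Cφ * Real.exp Cφ) * (φ (x₀ - y) * ‖g y‖))
      (F' := fun x y => g y • fderiv ℝ φ (x - y)) (Metric.ball_mem_nhds x₀ zero_lt_one) ?_ ?_ ?_ ?_ ?_ ?_
    · filter_upwards with x
      exact ((hφd.continuous.comp (continuous_const.sub continuous_id)).mul
        hgc).aestronglyMeasurable
    · exact hIg x₀
    · exact (hgc.smul (hcφ.comp (continuous_const.sub continuous_id))).aestronglyMeasurable
    · filter_upwards with y
      intro x hx
      show ‖g y • fderiv ℝ φ (x - y)‖ ≤ _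
      rw [norm_smul]
      calc ‖g y‖ * ‖fderiv ℝ φ (x - y)‖ ≤ ‖g y‖ * (Cφ * φ (x - y)) :=
            mul_le_mul_of_nonneg_left (hfd _) (norm_nonneg _)
        _ ≤ ‖g y‖ * (Cφ * (Real.exp Cφ * φ (x₀ - y))) := by
            apply mul_le_mul_of_nonneg_left _ (norm_nonneg _)
            apply mul_le_mul_of_nonneg_left _ hC
            have h7 : x - y = (x₀ - y) + (x - x₀) := by abel
            rw [h7]
            calc φ ((x₀ - y) + (x - x₀)) ≤ Real.exp (Cφ * ‖x - x₀‖) * φ (x₀ - y) := hH _ _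
              _ ≤ Real.exp Cφ * φ (x₀ - y) := by
                  apply mul_le_mul_of_nonneg_right _ (hφ0 _)
                  apply Real.exp_le_exp.2
                  have h6 : ‖x - x₀‖ ≤ 1 := by
                    rw [← dist_eq_norm]; exact (Metric.mem_ball.1 hx).le
                  calc Cφ * ‖x - x₀‖ ≤ Cφ * 1 := mul_le_mul_of_nonneg_left h6 hC
                    _ = Cφ := mul_one Cφ
        _ = Cφ * Real.exp Cφ * (φ (x₀ - y) * ‖g y‖) := by ring
    · exact (key_int x₀ (fun y => ‖g y‖) hgc.norm
        (hgb.imp fun C hC' y => by simpa using hC' y)).const_mul _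
    · filter_upwards with y
      intro x hx
      have h8 : HasFDerivAt (fun x => φ (x - y)) (fderiv ℝ φ (x - y)) x := by
        have := (hφd (x - y)).hasFDerivAt.comp x ((hasFDerivAt_id x).sub_const y)
        simp at this; exact this
      exact h8.mul_const (g y)
  have hφδ' : ∀ x', φδ x' = ∫ y, φ (x' - y) * g y := hφδ
  have hφδ_fun : φδ = fun x' => ∫ y, φ (x' - y) * g y := funext hφδ'
  -- integrability of the CLM-valued integrand
  have hIsm : ∀ x', Integrable (fun y => g y • fderiv ℝ φ (x' - y)) := by
    intro x'
    refine Integrable.mono' ((key_int x' (fun y => ‖g y‖) hgc.norm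
      (hgb.imp fun C h y => by simpa using h y)).const_mul Cφ)
      (hgc.smul (hcφ.comp (continuous_const.sub continuous_id))).aestronglyMeasurable ?_
    filter_upwards with y
    rw [norm_smul]
    calc ‖g y‖ * ‖fderiv ℝ φ (x' - y)‖ ≤ ‖g y‖ * (Cφ * φ (x' - y)) :=
          mul_le_mul_of_nonneg_left (hfd _) (norm_nonneg _)
      _ = Cφ * (φ (x' - y) * ‖g y‖) := by ring
  have hfderivφδ : ∀ x', fderiv ℝ φδ x' = ∫ y, g y • fderiv ℝ φ (x' - y) := by
    intro x'
    rw [hφδ_fun]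
    exact (step1 x').fderiv
  set e : Fin d → EuclideanSpace ℝ (Fin d) := fun i => EuclideanSpace.single i (1 : ℝ)
    with he_def
  set Di : Fin d → EuclideanSpace ℝ (Fin d) → ℝ := fun i z => fderiv ℝ φ z (e i) with hDi_def
  have hDic : ∀ i, Continuous (Di i) := by
    intro i
    exact (ContinuousLinearMap.apply ℝ ℝ (e i)).continuous.comp hcφ
  have hΦi : ∀ (i : Fin d) (x' : EuclideanSpace ℝ (Fin d)),
      fderiv ℝ φδ x' (e i) = ∫ y, Di i (x' - y) * g y := by
    intro i x'
    rw [hfderivφδ x', ContinuousLinearMap.integral_apply (hIsm x')]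
    congr 1
    ext y
    simp [hDi_def, mul_comm]
  have hconv : ∀ (i : Fin d),
      (fun x' => fderiv ℝ φδ x' (e i))
        = convolution (Di i) g (ContinuousLinearMap.mul ℝ ℝ) volume := by
    intro i
    ext x'
    calc fderiv ℝ φδ x' (e i) = ∫ y, Di i (x' - y) * g y := hΦi i x'
      _ = ∫ y, Di i (x' - (x' - y)) * g (x' - y) :=
          (integral_sub_left_eq_self (fun y => Di i (x' - y) * g y) volume x').symm
      _ = ∫ y, Di i y * g (x' - y) := by simp
      _ = convolution (Di i) g (ContinuousLinearMap.mul ℝ ℝ) volume x' := by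
          rw [convolution_def]
          simp [ContinuousLinearMap.mul_apply']
  have hGc : Continuous (fderiv ℝ g) := hgsm.continuous_fderiv one_ne_zero
  have hGcs : HasCompactSupport (fderiv ℝ g) := hgcs.fderiv ℝ
  have step2 : ∀ i : Fin d, fderiv ℝ (fun x' => fderiv ℝ φδ x' (e i)) x (e i)
      = ∫ y, Di i (x - y) * fderiv ℝ g y (e i) := by
    intro i
    have hDiLi : MeasureTheory.LocallyIntegrable (Di i) volume := (hDic i).locallyIntegrable
    have hder := hgcs.hasFDerivAt_convolution_right (ContinuousLinearMap.mul ℝ ℝ) hDiLi hgsm x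
    rw [hconv i, hder.fderiv,
      convolution_precompR_apply (ContinuousLinearMap.mul ℝ ℝ) hDiLi hGcs hGc x (e i)]
    calc convolution (Di i) (fun a => fderiv ℝ g a (e i)) (ContinuousLinearMap.mul ℝ ℝ) volume x
        = ∫ t, Di i t * fderiv ℝ g (x - t) (e i) := by
          rw [convolution_def]
          simp [ContinuousLinearMap.mul_apply']
      _ = ∫ t, (fun y => Di i (x - y) * fderiv ℝ g y (e i)) (x - t) := by
          congr 1; ext t; simp
      _ = ∫ y, Di i (x - y) * fderiv ℝ g y (e i) :=
          integral_sub_left_eq_self (fun y => Di i (x - y) * fderiv ℝ g y (e i)) volume x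
  -- bounds for integrands
  have hIdom : Integrable (fun y => φ (x - y) * ‖fderiv ℝ g y‖) :=
    key_int x (fun y => ‖fderiv ℝ g y‖) hGc.norm
      ((hGcs.exists_bound_of_continuous hGc).imp fun C h y => by simpa using h y)
  have hei : ∀ i : Fin d, ‖e i‖ = 1 := by
    intro i; rw [he_def]; simp [EuclideanSpace.norm_single]
  have hterm : ∀ i : Fin d, Integrable (fun y => Di i (x - y) * fderiv ℝ g y (e i)) := by
    intro i
    refine Integrable.mono' (hIdom.const_mul Cφ)
      (((((hDic i).comp (continuous_const.sub continuous_id))).mul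
        ((ContinuousLinearMap.apply ℝ ℝ (e i)).continuous.comp hGc)).aestronglyMeasurable) ?_
    filter_upwards with y
    rw [norm_mul]
    have h1 : ‖Di i (x - y)‖ ≤ Cφ * φ (x - y) := by
      calc ‖Di i (x - y)‖ ≤ ‖fderiv ℝ φ (x - y)‖ * ‖e i‖ :=
            (fderiv ℝ φ (x - y)).le_opNorm (e i)
        _ = ‖fderiv ℝ φ (x - y)‖ := by rw [hei i, mul_one]
        _ ≤ Cφ * φ (x - y) := hfd _
    have h2 : ‖fderiv ℝ g y (e i)‖ ≤ ‖fderiv ℝ g y‖ := by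
      calc ‖fderiv ℝ g y (e i)‖ ≤ ‖fderiv ℝ g y‖ * ‖e i‖ := (fderiv ℝ g y).le_opNorm (e i)
        _ = ‖fderiv ℝ g y‖ := by rw [hei i, mul_one]
    calc ‖Di i (x - y)‖ * ‖fderiv ℝ g y (e i)‖ ≤ (Cφ * φ (x - y)) * ‖fderiv ℝ g y‖ :=
          mul_le_mul h1 h2 (norm_nonneg _) (mul_nonneg hC (hφ0 _))
      _ = Cφ * (φ (x - y) * ‖fderiv ℝ g y‖) := by ring
  -- pointwise identity with inner products
  have happ : ∀ (f : EuclideanSpace ℝ (Fin d) → ℝ) (w : EuclideanSpace ℝ (Fin d)) (i : Fin d),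
      fderiv ℝ f w (e i) = gradient f w i := by
    intro f w i
    have h1 : (inner ℝ (gradient f w) (e i) : ℝ) = fderiv ℝ f w (e i) :=
      InnerProductSpace.toDual_symm_apply
    rw [he_def] at h1
    rw [EuclideanSpace.inner_single_right] at h1
    simpa [he_def] using h1.symm
  have hsum_eq : (∑ i : Fin d, fderiv ℝ (fun x' => fderiv ℝ φδ x' (e i)) x (e i))
      = ∫ y, (inner ℝ (gradient φ (x - y)) (gradient g y) : ℝ) := by
    calc (∑ i : Fin d, fderiv ℝ (fun x' => fderiv ℝ φδ x' (e i)) x (e i))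
        = ∑ i : Fin d, ∫ y, Di i (x - y) * fderiv ℝ g y (e i) := by
          exact Finset.sum_congr rfl fun i _ => step2 i
      _ = ∫ y, ∑ i : Fin d, Di i (x - y) * fderiv ℝ g y (e i) :=
          (integral_finset_sum Finset.univ fun i _ => hterm i).symm
      _ = ∫ y, (inner ℝ (gradient φ (x - y)) (gradient g y) : ℝ) := by
          congr 1
          ext y
          rw [PiLp.inner_apply]
          refine Finset.sum_congr rfl fun i _ => ?_
          rw [hDi_def]
          simp only [happ φ (x - y) i, happ g y i]
          simp [RCLike.inner_apply, mul_comm]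
  -- continuity of gradients
  have hgradφc : Continuous (gradient φ) :=
    (InnerProductSpace.toDual ℝ (EuclideanSpace ℝ (Fin d))).symm.continuous.comp hcφ
  have hgradgc : Continuous (gradient g) :=
    (InnerProductSpace.toDual ℝ (EuclideanSpace ℝ (Fin d))).symm.continuous.comp hGc
  have hptS : ∀ y, |(inner ℝ (gradient φ (x - y)) (gradient g y) : ℝ)|
      ≤ Cφ * (φ (x - y) * ‖fderiv ℝ g y‖) := by
    intro y
    calc |(inner ℝ (gradient φ (x - y)) (gradient g y) : ℝ)|
        ≤ ‖gradient φ (x - y)‖ * ‖gradient g y‖ := abs_real_inner_le_norm _ _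
      _ ≤ (Cφ * φ (x - y)) * ‖fderiv ℝ g y‖ := by
          rw [hng g]
          exact mul_le_mul_of_nonneg_right (hgrad _) (norm_nonneg _)
      _ = Cφ * (φ (x - y) * ‖fderiv ℝ g y‖) := by ring
  have hSint : Integrable (fun y => (inner ℝ (gradient φ (x - y)) (gradient g y) : ℝ)) := by
    refine Integrable.mono' (hIdom.const_mul Cφ)
      ((Continuous.inner (hgradφc.comp (continuous_const.sub continuous_id))
        hgradgc).aestronglyMeasurable) ?_
    filter_upwards with y
    simpa using hptS y
  have hGnorm_int : Integrable (fun y => ‖fderiv ℝ g y‖) :=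
    (hGc.norm).integrable_of_hasCompactSupport hGcs.norm
  -- support bound
  have htsupp : tsupport g ⊆ Metric.closedBall 0 δ :=
    closure_minimal (hgsupp.trans Metric.ball_subset_closedBall) Metric.isClosed_closedBall
  have hsupp_bd : ∀ y, φ (x - y) * ‖fderiv ℝ g y‖
      ≤ (Real.exp (Cφ * δ) * φ x) * ‖fderiv ℝ g y‖ := by
    intro y
    rcases eq_or_ne (fderiv ℝ g y) 0 with h|h
    · simp [h]
    · have hyδ : ‖y‖ ≤ δ := by
        have hmem := htsupp (support_fderiv_subset ℝ (Function.mem_support.2 h))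
        simpa [Metric.mem_closedBall, dist_zero_right] using hmem
      refine mul_le_mul_of_nonneg_right ?_ (norm_nonneg _)
      calc φ (x - y) = φ (x + (-y)) := by rw [sub_eq_add_neg]
        _ ≤ Real.exp (Cφ * ‖-y‖) * φ x := hH x (-y)
        _ ≤ Real.exp (Cφ * δ) * φ x :=
            mul_le_mul_of_nonneg_right (Real.exp_le_exp.2
              (by rw [norm_neg]; exact mul_le_mul_of_nonneg_left hyδ hC)) (hφ0 x)
  have step3 : |∫ y, (inner ℝ (gradient φ (x - y)) (gradient g y) : ℝ)|
      ≤ Cφ * ((Real.exp (Cφ * δ) * φ x) * (δ⁻¹ * ∫ y, ‖fderiv ℝ J y‖)) := by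
    calc |∫ y, (inner ℝ (gradient φ (x - y)) (gradient g y) : ℝ)|
        ≤ ∫ y, |(inner ℝ (gradient φ (x - y)) (gradient g y) : ℝ)| := by
          simpa [Real.norm_eq_abs] using
            norm_integral_le_integral_norm
              (fun y => (inner ℝ (gradient φ (x - y)) (gradient g y) : ℝ))
      _ ≤ ∫ y, Cφ * (φ (x - y) * ‖fderiv ℝ g y‖) :=
          integral_mono hSint.abs (hIdom.const_mul Cφ) hptS
      _ ≤ ∫ y, Cφ * ((Real.exp (Cφ * δ) * φ x) * ‖fderiv ℝ g y‖) :=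
          integral_mono (hIdom.const_mul Cφ)
            ((hGnorm_int.const_mul _).const_mul Cφ)
            (fun y => mul_le_mul_of_nonneg_left (hsupp_bd y) hC)
      _ = Cφ * ((Real.exp (Cφ * δ) * φ x) * ∫ y, ‖fderiv ℝ g y‖) := by
          rw [integral_const_mul, integral_const_mul]
      _ = Cφ * ((Real.exp (Cφ * δ) * φ x) * (δ⁻¹ * ∫ y, ‖fderiv ℝ J y‖)) := by
          rw [hfgint]
  -- lower bound for φδ
  have hφδx0 : 0 ≤ φδ x := by
    rw [hφδ' x]
    exact integral_nonneg fun y => mul_nonneg (hφ0 _) (hg0 _)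
  have hgi : Integrable g := hgc.integrable_of_hasCompactSupport hgcs
  have hlow : φ x ≤ Real.exp (Cφ * δ) * φδ x := by
    have h1 : ∀ y, (Real.exp (Cφ * δ))⁻¹ * φ x * g y ≤ φ (x - y) * g y := by
      intro y
      rcases eq_or_ne (g y) 0 with h|h
      · simp [h]
      · have hyδ : ‖y‖ ≤ δ := by
          have hmem := hgsupp (Function.mem_support.2 h)
          simp only [Metric.mem_ball, dist_zero_right] at hmem
          exact hmem.le
        have h2 : φ x ≤ Real.exp (Cφ * δ) * φ (x - y) := by
          have hx2 : x = (x - y) + y := by abel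
          calc φ x = φ ((x - y) + y) := by rw [← hx2]
            _ ≤ Real.exp (Cφ * ‖y‖) * φ (x - y) := hH _ _
            _ ≤ Real.exp (Cφ * δ) * φ (x - y) :=
                mul_le_mul_of_nonneg_right (Real.exp_le_exp.2
                  (mul_le_mul_of_nonneg_left hyδ hC)) (hφ0 _)
        have h3 : (Real.exp (Cφ * δ))⁻¹ * φ x ≤ φ (x - y) := by
          rw [inv_mul_le_iff₀ (Real.exp_pos _)]
          exact h2
        exact mul_le_mul_of_nonneg_right h3 (hg0 y)
    have h4 := integral_mono (hgi.const_mul ((Real.exp (Cφ * δ))⁻¹ * φ x)) (hIg x) h1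
    rw [integral_const_mul, hgint, mul_one, ← hφδ' x] at h4
    rw [inv_mul_le_iff₀ (Real.exp_pos _)] at h4
    exact h4
  -- final assembly
  simp only [hng]
  have hsum_eq' : (∑ i : Fin d,
      fderiv ℝ (fun y => fderiv ℝ φδ y (EuclideanSpace.single i (1 : ℝ))) x
        (EuclideanSpace.single i (1 : ℝ)))
      = ∫ y, (inner ℝ (gradient φ (x - y)) (gradient g y) : ℝ) := hsum_eq
  rw [hsum_eq']
  have hA0 : (0:ℝ) ≤ ∫ y, ‖fderiv ℝ J y‖ := integral_nonneg fun y => norm_nonneg _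
  have hexp : Real.exp (Cφ * δ) ≤ 1 + Cφ * δ * (1 + Cφ * δ * Real.exp (Cφ * δ)) :=
    aux_exp_le (mul_nonneg hC hδ.le)
  calc |∫ y, (inner ℝ (gradient φ (x - y)) (gradient g y) : ℝ)|
      ≤ Cφ * ((Real.exp (Cφ * δ) * φ x) * (δ⁻¹ * ∫ y, ‖fderiv ℝ J y‖)) := step3
    _ ≤ Cφ * ((Real.exp (Cφ * δ) * (Real.exp (Cφ * δ) * φδ x))
        * (δ⁻¹ * ∫ y, ‖fderiv ℝ J y‖)) := by
        gcongr
    _ = (δ⁻¹ * Cφ * (∫ y, ‖fderiv ℝ J y‖))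
        * (Real.exp (Cφ * δ) * Real.exp (Cφ * δ)) * φδ x := by ring
    _ ≤ (δ⁻¹ * Cφ * (∫ y, ‖fderiv ℝ J y‖))
        * ((1 + Cφ * δ * (1 + Cφ * δ * Real.exp (Cφ * δ)))
          * (1 + Cφ * δ * (1 + Cφ * δ * Real.exp (Cφ * δ)))) * φδ x := by
        refine mul_le_mul_of_nonneg_right ?_ hφδx0
        refine mul_le_mul_of_nonneg_left ?_ (by positivity)
        exact mul_le_mul hexp hexp (Real.exp_pos _).le
          (le_trans (Real.exp_pos _).le hexp)
    _ = δ⁻¹ * Cφ * (∫ y, ‖fderiv ℝ J y‖)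
        * (1 + Cφ * δ * (1 + Cφ * δ * Real.exp (Cφ * δ))) ^ 2 * φδ x := by ring
end

section
/- Let Φ_ε(t,x) = (4επt)^{-d/2} exp(−|x|²/(4εt)) be the heat kernel on ℝ^d and let φ ∈ 𝔑 with constant C_φ, 1 ≤ p < ∞. If C_φ √(4εt) ≤ 1, then for every u ∈ L^p(ℝ^d, φ): ‖Φ_ε(t) ⋆ u‖_{p,φ} ≤ κ_{1,d} ‖u‖_{p,φ}, where κ_{1,d} = c_{d−1} d α(d) / π^{d/2}, c_d = ∫_0^∞ ζ^d (1+ζ)² e^{ζ−ζ²} dζ, and α(d) is the volume of the unit ball in ℝ^d. -/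
/-!
Integrating `|∇φ| ≤ C_φ φ` along segments (Grönwall) gives `φ x ≤ e^{C_φ |x - y|} φ y`.
Since `Φ = Φ_ε(t)` is a probability density, Jensen gives `|Φ ⋆ u|^p ≤ Φ ⋆ |u|^p`; integrating
against `φ` and exchanging the integrals, `‖Φ ⋆ u‖_{p,φ}^p ≤ I ‖u‖_{p,φ}^p` with
`I = ∫ Φ(z) e^{C_φ |z|} dz ≥ 1`, so `‖Φ ⋆ u‖_{p,φ} ≤ I ‖u‖_{p,φ}`. In polar coordinates and after
the scaling `|z| = √(4εt) ζ`, `I = d α(d) π^{-d/2} ∫₀^∞ ζ^{d-1} e^{C_φ √(4εt) ζ - ζ²} dζ`, and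
`C_φ √(4εt) ≤ 1` bounds this by `κ_{1,d}`.
-/

open MeasureTheory Real Set Module
open scoped ENNReal

theorem le_exp_mul_norm_sub_mul_of_norm_fderiv_le {E : Type*} [NormedAddCommGroup E]
    [NormedSpace ℝ E] {φ : E → ℝ} {C : ℝ} (hφ : Differentiable ℝ φ) (hφ0 : ∀ x, 0 ≤ φ x)
    (hC : ∀ x, ‖fderiv ℝ φ x‖ ≤ C * φ x) (x y : E) :
    φ x ≤ exp (C * ‖x - y‖) * φ y := by
  set L : ℝ → E := fun s => y + s • (x - y)
  have hL : ∀ s, HasDerivAt L (x - y) s := fun s => by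
    simpa only [id, one_smul] using ((hasDerivAt_id s).smul_const (x - y)).const_add y
  have hderiv : ∀ s, HasDerivAt (φ ∘ L) (fderiv ℝ φ (L s) (x - y)) s := fun s =>
    (hφ (L s)).hasFDerivAt.comp_hasDerivAt s (hL s)
  have hgrowth : ∀ s ∈ Ico (0 : ℝ) 1,
      ‖fderiv ℝ φ (L s) (x - y)‖ ≤ C * ‖x - y‖ * ‖(φ ∘ L) s‖ + 0 := fun s _ => by
    rw [Function.comp_apply, Real.norm_of_nonneg (hφ0 _), add_zero, mul_right_comm]
    exact ((fderiv ℝ φ (L s)).le_opNorm _).trans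
      (mul_le_mul_of_nonneg_right (hC _) (norm_nonneg _))
  have h := norm_le_gronwallBound_of_norm_deriv_right_le (δ := φ y)
    (hφ.continuous.comp (continuous_const.add (continuous_id.smul continuous_const))).continuousOn
    (fun s _ => (hderiv s).hasDerivWithinAt) (by simp [Real.norm_of_nonneg (hφ0 y)])
    hgrowth 1 (by simp)
  simpa [L, gronwallBound_ε0, Real.norm_of_nonneg (hφ0 x), mul_comm] using h

theorem ENNReal.rpow_lintegral_mul_le_lintegral_mul_rpow {α : Type*} [MeasurableSpace α]
    {μ : Measure α} {w f : α → ℝ≥0∞} (hw : AEMeasurable w μ) (hf : AEMeasurable f μ)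
    (hw1 : ∫⁻ a, w a ∂μ = 1) {p : ℝ} (hp : 1 ≤ p) :
    (∫⁻ a, w a * f a ∂μ) ^ p ≤ ∫⁻ a, w a * f a ^ p ∂μ := by
  have hp0 : 0 < p := zero_lt_one.trans_le hp
  -- Hölder with exponents `1/p + (1 - 1/p) = 1`, applied to `w f^p` and `w`.
  have hsplit : ∀ a, (w a * f a ^ p) ^ p⁻¹ * w a ^ (1 - p⁻¹) = w a * f a := fun a => by
    rw [ENNReal.mul_rpow_of_nonneg _ _ (by positivity), ← ENNReal.rpow_mul,
      mul_inv_cancel₀ hp0.ne', ENNReal.rpow_one, mul_right_comm,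
      ← ENNReal.rpow_add_of_nonneg _ _ (by positivity) (by simp [inv_le_one_of_one_le₀ hp]),
      add_sub_cancel, ENNReal.rpow_one]
  have holder := ENNReal.lintegral_mul_norm_pow_le (hw.mul (hf.pow_const p)) hw
    (inv_nonneg.2 hp0.le) (by simp [inv_le_one_of_one_le₀ hp]) (add_sub_cancel _ 1)
  simp only [Pi.mul_apply, hsplit, hw1, ENNReal.one_rpow, mul_one] at holder
  calc (∫⁻ a, w a * f a ∂μ) ^ p ≤ ((∫⁻ a, w a * f a ^ p ∂μ) ^ p⁻¹) ^ p :=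
        ENNReal.rpow_le_rpow holder hp0.le
    _ = ∫⁻ a, w a * f a ^ p ∂μ := by
        rw [← ENNReal.rpow_mul, inv_mul_cancel₀ hp0.ne', ENNReal.rpow_one]

theorem lintegral_rpow_lintegral_sub_mul_le {G : Type*} [AddCommGroup G] [MeasurableSpace G]
    [MeasurableAdd₂ G] [MeasurableNeg G] {μ : Measure G} [SFinite μ] [μ.IsAddLeftInvariant]
    [μ.IsAddRightInvariant] [μ.IsNegInvariant] {W f Ψ g : G → ℝ≥0∞} (hW : Measurable W)
    (hW1 : ∫⁻ z, W z ∂μ = 1) (hf : AEMeasurable f μ) (hΨ : Measurable Ψ) (hg : Measurable g)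
    (hΨg : ∀ x y, Ψ x ≤ g (x - y) * Ψ y) {p : ℝ} (hp : 1 ≤ p) :
    ∫⁻ x, (∫⁻ y, W (x - y) * f y ∂μ) ^ p * Ψ x ∂μ ≤
      (∫⁻ z, W z * g z ∂μ) * ∫⁻ y, f y ^ p * Ψ y ∂μ := by
  have hWsub : Measurable fun q : G × G => W (q.1 - q.2) := hW.comp measurable_sub
  have hWx : ∀ x, Measurable fun y => W (x - y) := fun x => hWsub.comp measurable_prodMk_left
  have hWy : ∀ y, Measurable fun x => W (x - y) := fun y => hWsub.comp measurable_prodMk_right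
  have hfp : AEMeasurable (fun y => f y ^ p) μ := hf.pow_const p
  calc ∫⁻ x, (∫⁻ y, W (x - y) * f y ∂μ) ^ p * Ψ x ∂μ
      ≤ ∫⁻ x, (∫⁻ y, W (x - y) * f y ^ p ∂μ) * Ψ x ∂μ := by
        gcongr with x
        exact ENNReal.rpow_lintegral_mul_le_lintegral_mul_rpow (hWx x).aemeasurable hf
          ((lintegral_sub_left_eq_self W x).trans hW1) hp
    _ = ∫⁻ x, ∫⁻ y, W (x - y) * f y ^ p * Ψ x ∂μ ∂μ := lintegral_congr fun x =>
        (lintegral_mul_const'' (f := fun y => W (x - y) * f y ^ p) _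
          ((hWx x).aemeasurable.mul hfp)).symm
    _ = ∫⁻ y, ∫⁻ x, W (x - y) * f y ^ p * Ψ x ∂μ ∂μ := lintegral_lintegral_swap
        ((hWsub.aemeasurable.mul hfp.comp_snd).mul (hΨ.comp measurable_fst).aemeasurable)
    _ = ∫⁻ y, f y ^ p * ∫⁻ x, W (x - y) * Ψ x ∂μ ∂μ := lintegral_congr fun y => by
        rw [← lintegral_const_mul'' (f := fun x => W (x - y) * Ψ x) _
          ((hWy y).mul hΨ).aemeasurable]
        exact lintegral_congr fun x => by ring
    _ ≤ ∫⁻ y, f y ^ p * ((∫⁻ z, W z * g z ∂μ) * Ψ y) ∂μ := by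
        gcongr with y
        calc ∫⁻ x, W (x - y) * Ψ x ∂μ ≤ ∫⁻ x, W (x - y) * g (x - y) * Ψ y ∂μ := by
              refine lintegral_mono fun x => ?_
              rw [mul_assoc]
              exact mul_le_mul_right (hΨg x y) _
          _ = (∫⁻ z, W z * g z ∂μ) * Ψ y := by
              rw [lintegral_mul_const (f := fun x => W (x - y) * g (x - y)) _
                  ((hWy y).mul (hg.comp (measurable_sub_const y))),
                lintegral_sub_right_eq_self (fun z => W z * g z) y]
    _ = (∫⁻ z, W z * g z ∂μ) * ∫⁻ y, f y ^ p * Ψ y ∂μ := by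
        rw [← lintegral_const_mul'' (f := fun y => f y ^ p * Ψ y) _ (hfp.mul hΨ.aemeasurable)]
        exact lintegral_congr fun y => by ring

theorem integral_rpow_abs_integral_sub_mul_le {G : Type*} [AddCommGroup G] [MeasurableSpace G]
    [MeasurableAdd₂ G] [MeasurableNeg G] {μ : Measure G} [SFinite μ] [μ.IsAddLeftInvariant]
    [μ.IsAddRightInvariant] [μ.IsNegInvariant] {K u φ g : G → ℝ} (hK : Measurable K)
    (hK0 : ∀ z, 0 ≤ K z) (hK1 : ∫ z, K z ∂μ = 1) (hg : Measurable g) (hg0 : ∀ z, 0 ≤ g z)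
    (hKg : Integrable (fun z => K z * g z) μ) (hφ : Measurable φ) (hφ0 : ∀ x, 0 ≤ φ x)
    (hφg : ∀ x y, φ x ≤ g (x - y) * φ y) (hu : AEStronglyMeasurable u μ) {p : ℝ} (hp : 1 ≤ p)
    (huφ : Integrable (fun x => |u x| ^ p * φ x) μ) :
    ∫ x, |∫ y, K (x - y) * u y ∂μ| ^ p * φ x ∂μ ≤
      (∫ z, K z * g z ∂μ) * ∫ x, |u x| ^ p * φ x ∂μ := by
  have hp0 : 0 ≤ p := zero_le_one.trans hp
  have hofReal_rpow_mul : ∀ a b : ℝ, 0 ≤ b →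
      ENNReal.ofReal (|a| ^ p * b) = ENNReal.ofReal |a| ^ p * ENNReal.ofReal b := fun a b hb => by
    rw [ENNReal.ofReal_mul (by positivity), ENNReal.ofReal_rpow_of_nonneg (abs_nonneg a) hp0]
  have hK1' : ∫⁻ z, ENNReal.ofReal (K z) ∂μ = 1 := by
    rw [← ofReal_integral_eq_lintegral_ofReal (Integrable.of_integral_ne_zero (by simp [hK1]))
      (.of_forall hK0), hK1, ENNReal.ofReal_one]
  have hKg' : ∫⁻ z, ENNReal.ofReal (K z) * ENNReal.ofReal (g z) ∂μ =
      ENNReal.ofReal (∫ z, K z * g z ∂μ) := by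
    rw [ofReal_integral_eq_lintegral_ofReal hKg (.of_forall fun z => mul_nonneg (hK0 z) (hg0 z))]
    exact lintegral_congr fun z => (ENNReal.ofReal_mul (hK0 z)).symm
  have huφ' : ∫⁻ x, ENNReal.ofReal |u x| ^ p * ENNReal.ofReal (φ x) ∂μ =
      ENNReal.ofReal (∫ x, |u x| ^ p * φ x ∂μ) := by
    rw [ofReal_integral_eq_lintegral_ofReal huφ (.of_forall fun x => by positivity [hφ0 x])]
    exact lintegral_congr fun x => (hofReal_rpow_mul _ _ (hφ0 x)).symm
  have hconv : ∀ x, ENNReal.ofReal |∫ y, K (x - y) * u y ∂μ| ≤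
      ∫⁻ y, ENNReal.ofReal (K (x - y)) * ENNReal.ofReal |u y| ∂μ := fun x => by
    rw [← Real.enorm_eq_ofReal_abs]
    refine (enorm_integral_le_lintegral_enorm _).trans_eq (lintegral_congr fun y => ?_)
    rw [enorm_mul, Real.enorm_eq_ofReal_abs, Real.enorm_eq_ofReal_abs, abs_of_nonneg (hK0 _)]
  have hlintegral := lintegral_rpow_lintegral_sub_mul_le (μ := μ)
    (W := fun z => ENNReal.ofReal (K z)) (f := fun y => ENNReal.ofReal |u y|)
    (Ψ := fun x => ENNReal.ofReal (φ x)) (g := fun z => ENNReal.ofReal (g z))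
    (ENNReal.measurable_ofReal.comp hK) hK1'
    (ENNReal.measurable_ofReal.comp_aemeasurable hu.norm.aemeasurable)
    (ENNReal.measurable_ofReal.comp hφ) (ENNReal.measurable_ofReal.comp hg)
    (fun x y => by rw [← ENNReal.ofReal_mul (hg0 _)]; exact ENNReal.ofReal_le_ofReal (hφg x y))
    hp
  have hI0 : 0 ≤ ∫ z, K z * g z ∂μ := integral_nonneg fun z => mul_nonneg (hK0 z) (hg0 z)
  have hB0 : 0 ≤ ∫ x, |u x| ^ p * φ x ∂μ := integral_nonneg fun x => by positivity [hφ0 x]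
  rw [hKg', huφ', ← ENNReal.ofReal_mul hI0] at hlintegral
  refine (le_norm_self _).trans ((norm_integral_le_lintegral_norm _).trans
    (ENNReal.toReal_le_of_le_ofReal (mul_nonneg hI0 hB0)
      ((lintegral_mono fun x => ?_).trans hlintegral)))
  rw [Real.norm_of_nonneg (by positivity [hφ0 x]), hofReal_rpow_mul _ _ (hφ0 x)]
  gcongr
  exact hconv x

theorem integrableOn_rpow_mul_one_add_sq_mul_exp_sub_sq {r : ℝ} (hr : -1 < r) :
    IntegrableOn (fun ζ : ℝ => ζ ^ r * (1 + ζ) ^ 2 * exp (ζ - ζ ^ 2)) (Ioi 0) := by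
  have hgamma := ((integrableOn_rpow_mul_exp_neg_rpow hr one_pos).add
    (integrableOn_rpow_mul_exp_neg_rpow (s := r + 2) (by linarith) one_pos)).const_mul (2 * exp 1)
  refine hgamma.mono' ?_ ((ae_restrict_iff' measurableSet_Ioi).2 (.of_forall fun ζ hζ => ?_))
  · refine ContinuousOn.aestronglyMeasurable ?_ measurableSet_Ioi
    exact ((continuousOn_id.rpow_const fun ζ hζ => .inl (ne_of_gt hζ)).mul
      (by fun_prop)).mul (by fun_prop)
  have hζ : 0 < ζ := hζ
  simp only [Pi.add_apply, rpow_one]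
  rw [Real.norm_of_nonneg (by positivity), rpow_add hζ, rpow_two]
  have hexp : exp (ζ - ζ ^ 2) ≤ exp 1 * exp (-ζ) := by
    rw [← exp_add]; exact exp_le_exp.2 (by nlinarith [sq_nonneg (ζ - 1)])
  calc ζ ^ r * (1 + ζ) ^ 2 * exp (ζ - ζ ^ 2) ≤ ζ ^ r * (2 * (1 + ζ ^ 2)) * (exp 1 * exp (-ζ)) := by
        gcongr
        nlinarith [sq_nonneg (ζ - 1)]
    _ = 2 * exp 1 * (ζ ^ r * exp (-ζ) + ζ ^ r * ζ ^ 2 * exp (-ζ)) := by ring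

section HeatKernel

variable {V : Type*} [NormedAddCommGroup V] [InnerProductSpace ℝ V]

/-- The paper's heat kernel `Φ_ε(t, ·)` is `heatKernel (4 * ε * t)`. -/
noncomputable def heatKernel (a : ℝ) (z : V) : ℝ :=
  (π * a) ^ (-(finrank ℝ V : ℝ) / 2) * exp (-‖z‖ ^ 2 / a)

theorem heatKernel_pos {a : ℝ} (ha : 0 < a) (z : V) : 0 < heatKernel a z := by
  unfold heatKernel; positivity

theorem continuous_heatKernel (a : ℝ) : Continuous (heatKernel (V := V) a) := by
  unfold heatKernel; fun_prop

variable [FiniteDimensional ℝ V] [MeasurableSpace V] [BorelSpace V]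

theorem integral_heatKernel {a : ℝ} (ha : 0 < a) : ∫ z : V, heatKernel a z = 1 := by
  have hgauss := GaussianFourier.integral_rexp_neg_mul_sq_norm (V := V) (inv_pos.2 ha)
  simp_rw [heatKernel, neg_div, div_eq_inv_mul (‖_‖ ^ 2), ← neg_mul]
  rw [integral_const_mul, hgauss, div_inv_eq_mul, ← rpow_add (by positivity),
    neg_add_cancel, rpow_zero]

theorem integrable_exp_neg_mul_sq_norm {b : ℝ} (hb : 0 < b) :
    Integrable fun z : V => exp (-b * ‖z‖ ^ 2) :=
  .of_integral_ne_zero <| by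
    rw [GaussianFourier.integral_rexp_neg_mul_sq_norm hb]; positivity

theorem integrable_heatKernel_mul_exp_norm {a : ℝ} (ha : 0 < a) (C : ℝ) :
    Integrable fun z : V => heatKernel a z * exp (C * ‖z‖) := by
  refine ((integrable_exp_neg_mul_sq_norm (inv_pos.2 (mul_pos two_pos ha))).const_mul
    ((π * a) ^ (-(finrank ℝ V : ℝ) / 2) * exp (a * C ^ 2 / 2))).mono'
    ((continuous_heatKernel a).mul (by fun_prop)).aestronglyMeasurable (.of_forall fun z => ?_)
  rw [Real.norm_of_nonneg (by positivity [heatKernel_pos ha z]), heatKernel, mul_assoc,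
    mul_assoc, ← exp_add, ← exp_add]
  refine mul_le_mul_of_nonneg_left (exp_le_exp.2 ?_) (by positivity)
  -- AM-GM: `C ‖z‖ ≤ ‖z‖² / (2a) + a C² / 2`, whence the factor `exp (a C² / 2)`.
  have hamgm : 2 * a * (C * ‖z‖) ≤ ‖z‖ ^ 2 + (a * C) ^ 2 := by nlinarith [sq_nonneg (‖z‖ - a * C)]
  field_simp
  nlinarith

theorem integral_heatKernel_mul_exp_norm_eq [Nontrivial V] {a : ℝ} (ha : 0 < a) (C : ℝ) :
    ∫ z : V, heatKernel a z * exp (C * ‖z‖) =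
      finrank ℝ V * volume.real (Metric.ball (0 : V) 1) * π ^ (-(finrank ℝ V : ℝ) / 2) *
        ∫ ζ in Ioi (0 : ℝ), ζ ^ (finrank ℝ V - 1) * exp (C * √a * ζ - ζ ^ 2) := by
  obtain ⟨s, hs, rfl⟩ : ∃ s, 0 < s ∧ s ^ 2 = a := ⟨√a, sqrt_pos.2 ha, sq_sqrt ha.le⟩
  rw [sqrt_sq hs.le]
  set n := finrank ℝ V
  set f : ℝ → ℝ := fun r =>
    r ^ (n - 1) * ((π * s ^ 2) ^ (-(n : ℝ) / 2) * exp (-r ^ 2 / s ^ 2) * exp (C * r))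
  -- The substitution `r = s ζ` is scale-free because `s ^ n * (s ^ 2) ^ (-n / 2) = 1`.
  have hscale : ∀ ζ, s * f (s * ζ) =
      π ^ (-(n : ℝ) / 2) * (ζ ^ (n - 1) * exp (C * s * ζ - ζ ^ 2)) := by
    intro ζ
    have hpow : s * s ^ (n - 1) * (s ^ 2) ^ (-(n : ℝ) / 2) = 1 := by
      rw [← pow_succ', Nat.sub_add_cancel finrank_pos, ← rpow_natCast, ← rpow_two,
        ← rpow_mul hs.le, ← rpow_add hs, show (n : ℝ) + 2 * (-(n : ℝ) / 2) = 0 by ring,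
        rpow_zero]
    have hexp : -(s * ζ) ^ 2 / s ^ 2 = -ζ ^ 2 := by field_simp
    simp only [f]
    rw [hexp, mul_rpow pi_pos.le (sq_nonneg s), sub_eq_add_neg, exp_add, mul_pow, ← mul_assoc C]
    linear_combination (π ^ (-(n : ℝ) / 2) * ζ ^ (n - 1) * exp (C * s * ζ) * exp (-ζ ^ 2)) * hpow
  have hsubst : ∫ r in Ioi (0 : ℝ), f r =
      π ^ (-(n : ℝ) / 2) * ∫ ζ in Ioi (0 : ℝ), ζ ^ (n - 1) * exp (C * s * ζ - ζ ^ 2) := by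
    rw [← integral_const_mul, ← funext hscale, integral_const_mul,
      integral_comp_mul_left_Ioi f 0 hs, mul_zero, smul_eq_mul, mul_inv_cancel_left₀ hs.ne']
  simp only [heatKernel]
  rw [integral_fun_norm_addHaar volume fun r =>
    (π * s ^ 2) ^ (-(n : ℝ) / 2) * exp (-r ^ 2 / s ^ 2) * exp (C * r)]
  simp only [nsmul_eq_mul, smul_eq_mul]
  rw [hsubst]
  ring

theorem integral_heatKernel_mul_exp_norm_le [Nontrivial V] {a C : ℝ} (ha : 0 < a)
    (hC : C * √a ≤ 1) :
    ∫ z : V, heatKernel a z * exp (C * ‖z‖) ≤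
      (∫ ζ in Ioi (0 : ℝ), ζ ^ ((finrank ℝ V : ℝ) - 1) * (1 + ζ) ^ 2 * exp (ζ - ζ ^ 2)) *
        (finrank ℝ V * (volume (Metric.ball (0 : V) 1)).toReal) / π ^ ((finrank ℝ V : ℝ) / 2) := by
  set n := finrank ℝ V
  have hn : 1 ≤ n := finrank_pos
  have hradial : ∫ ζ in Ioi (0 : ℝ), ζ ^ (n - 1) * exp (C * √a * ζ - ζ ^ 2) ≤
      ∫ ζ in Ioi (0 : ℝ), ζ ^ ((n : ℝ) - 1) * (1 + ζ) ^ 2 * exp (ζ - ζ ^ 2) := by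
    have hcast : (n : ℝ) - 1 = (n - 1 : ℕ) := by rw [Nat.cast_sub hn, Nat.cast_one]
    refine integral_mono_of_nonneg
      ((ae_restrict_iff' measurableSet_Ioi).2 (.of_forall fun ζ (hζ : 0 < ζ) => by positivity))
      (integrableOn_rpow_mul_one_add_sq_mul_exp_sub_sq
        (by rw [hcast]; linarith [Nat.cast_nonneg (α := ℝ) (n - 1)]))
      ((ae_restrict_iff' measurableSet_Ioi).2 (.of_forall fun ζ (hζ : 0 < ζ) => ?_))
    dsimp only
    rw [hcast, rpow_natCast, mul_assoc (ζ ^ (n - 1))]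
    refine mul_le_mul_of_nonneg_left ?_ (by positivity)
    calc exp (C * √a * ζ - ζ ^ 2) ≤ exp (ζ - ζ ^ 2) := by gcongr; nlinarith
      _ ≤ (1 + ζ) ^ 2 * exp (ζ - ζ ^ 2) := le_mul_of_one_le_left (by positivity) (by nlinarith)
  rw [integral_heatKernel_mul_exp_norm_eq ha, neg_div, rpow_neg pi_pos.le, Measure.real]
  calc _ ≤ n * (volume (Metric.ball (0 : V) 1)).toReal * (π ^ ((n : ℝ) / 2))⁻¹ *
        ∫ ζ in Ioi (0 : ℝ), ζ ^ ((n : ℝ) - 1) * (1 + ζ) ^ 2 * exp (ζ - ζ ^ 2) := by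
        gcongr
    _ = _ := by ring

theorem one_le_integral_heatKernel_mul_exp_norm {a C : ℝ} (ha : 0 < a) (hC : 0 ≤ C) :
    1 ≤ ∫ z : V, heatKernel a z * exp (C * ‖z‖) := by
  rw [← integral_heatKernel (V := V) ha]
  refine integral_mono (Integrable.of_integral_ne_zero (by simp [integral_heatKernel ha]))
    (integrable_heatKernel_mul_exp_norm ha C) fun z => ?_
  exact le_mul_of_one_le_right (heatKernel_pos ha z).le (one_le_exp (by positivity))

end HeatKernel

theorem stmt18_general (d : ℕ) (hd : 1 ≤ d) (ε t Cφ p : ℝ)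
    (hε : 0 < ε) (ht : 0 < t) (hp : 1 ≤ p)
    (hcond : Cφ * Real.sqrt (4 * ε * t) ≤ 1)
    (φ : EuclideanSpace ℝ (Fin d) → ℝ) (hφ1 : ContDiff ℝ 1 φ)
    (hφ0 : ∀ x, 0 ≤ φ x) (hCφ : 0 ≤ Cφ)
    (hgrad : ∀ x, ‖gradient φ x‖ ≤ Cφ * φ x)
    (u : EuclideanSpace ℝ (Fin d) → ℝ)
    (hum : AEStronglyMeasurable u volume)
    (hu : Integrable (fun x => |u x| ^ p * φ x)) :
    (∫ x, |∫ y, (4 * ε * Real.pi * t) ^ (-(d : ℝ) / 2) *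
          Real.exp (-‖x - y‖ ^ 2 / (4 * ε * t)) * u y| ^ p * φ x) ^ (1 / p) ≤
      ((∫ ζ in Set.Ioi (0 : ℝ), ζ ^ ((d : ℝ) - 1) * (1 + ζ) ^ 2 * Real.exp (ζ - ζ ^ 2)) *
          ((d : ℝ) * (volume (Metric.ball (0 : EuclideanSpace ℝ (Fin d)) 1)).toReal) /
          Real.pi ^ ((d : ℝ) / 2)) *
        (∫ x, |u x| ^ p * φ x) ^ (1 / p) := by
  have ha : 0 < 4 * ε * t := by positivity
  have : Nonempty (Fin d) := ⟨⟨0, hd⟩⟩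
  have hkernel : ∀ z : EuclideanSpace ℝ (Fin d),
      (4 * ε * π * t) ^ (-(d : ℝ) / 2) * exp (-‖z‖ ^ 2 / (4 * ε * t)) = heatKernel (4 * ε * t) z :=
    fun z => by
      rw [heatKernel, finrank_euclideanSpace_fin, show 4 * ε * π * t = π * (4 * ε * t) by ring]
  simp_rw [hkernel]
  have hgrowth : ∀ x y, φ x ≤ exp (Cφ * ‖x - y‖) * φ y :=
    le_exp_mul_norm_sub_mul_of_norm_fderiv_le (hφ1.differentiable one_ne_zero) hφ0
      fun x => by simpa [gradient] using hgrad x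
  have hconv := integral_rpow_abs_integral_sub_mul_le (μ := volume)
    (continuous_heatKernel _).measurable (fun z => (heatKernel_pos ha z).le)
    (integral_heatKernel ha)
    (by fun_prop : Measurable fun z : EuclideanSpace ℝ (Fin d) => exp (Cφ * ‖z‖))
    (fun _ => (exp_pos _).le) (integrable_heatKernel_mul_exp_norm ha Cφ)
    hφ1.continuous.measurable hφ0 hgrowth hum hp hu
  have hI1 := one_le_integral_heatKernel_mul_exp_norm (V := EuclideanSpace ℝ (Fin d)) ha hCφ
  have hIκ := integral_heatKernel_mul_exp_norm_le (V := EuclideanSpace ℝ (Fin d)) ha hcond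
  rw [finrank_euclideanSpace_fin] at hIκ
  set I := ∫ z : EuclideanSpace ℝ (Fin d), heatKernel (4 * ε * t) z * exp (Cφ * ‖z‖)
  set B := ∫ x, |u x| ^ p * φ x
  have hB : 0 ≤ B := integral_nonneg fun x => by positivity [hφ0 x]
  calc _ ≤ (I * B) ^ (1 / p) :=
        rpow_le_rpow (integral_nonneg fun x => by positivity [hφ0 x]) hconv (by positivity)
    _ ≤ I * B ^ (1 / p) := by
        rw [mul_rpow (by linarith) hB]
        gcongr
        exact rpow_le_self_of_one_le hI1 (div_le_one_of_le₀ hp (by linarith))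
    _ ≤ _ := by gcongr

theorem stmt18 (d : ℕ) (hd : 1 ≤ d) (ε t Cφ p : ℝ)
    (hε : 0 < ε) (ht : 0 < t) (hp : 1 ≤ p)
    (hcond : Cφ * Real.sqrt (4 * ε * t) ≤ 1)
    (φ : EuclideanSpace ℝ (Fin d) → ℝ) (hφ1 : ContDiff ℝ 1 φ)
    (hφ0 : ∀ x, 0 ≤ φ x) (hφi : Integrable φ) (hφne : φ ≠ 0) (hCφ : 0 ≤ Cφ)
    (hgrad : ∀ x, ‖gradient φ x‖ ≤ Cφ * φ x)
    (u : EuclideanSpace ℝ (Fin d) → ℝ)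
    (hum : AEStronglyMeasurable u volume)
    (hu : Integrable (fun x => |u x| ^ p * φ x)) :
    (∫ x, |∫ y, (4 * ε * Real.pi * t) ^ (-(d : ℝ) / 2) *
          Real.exp (-‖x - y‖ ^ 2 / (4 * ε * t)) * u y| ^ p * φ x) ^ (1 / p) ≤
      ((∫ ζ in Set.Ioi (0 : ℝ), ζ ^ ((d : ℝ) - 1) * (1 + ζ) ^ 2 * Real.exp (ζ - ζ ^ 2)) *
          ((d : ℝ) * (volume (Metric.ball (0 : EuclideanSpace ℝ (Fin d)) 1)).toReal) /
          Real.pi ^ ((d : ℝ) / 2)) *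
        (∫ x, |u x| ^ p * φ x) ^ (1 / p) :=
  stmt18_general d hd ε t Cφ p hε ht hp hcond φ hφ1 hφ0 hCφ hgrad u hum hu
end
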